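/- arXiv:math/0409374 — 10 statements merged into one kernel-verified Lean document; each statement's English description precedes it below -/
import Mathlib

section
/- Let F ∈ Z[X_1,...,X_N] be a non-zero polynomial of total degree M ≥ 1. Then there exists x ∈ Z^N with x_i ≠ 0 for all 1 ≤ i ≤ N, F(x) ≠ 0, and max_i |x_i| ≤ (M+2)/2. -/
open MvPolynomial in
lemma aux_stmt_3 (M : ℕ) (hM : 1 ≤ M) :
    ∀ n (F : MvPolynomial (Fin n) ℤ), F ≠ 0 → F.totalDegree ≤ M →
      ∃ x : Fin n → ℤ, MvPolynomial.eval x F ≠ 0 ∧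
        ∀ i, x i ≠ 0 ∧ 2 * |x i| ≤ (M : ℤ) + 2 := by
  intro n
  induction n with
  | zero =>
      intro F hF _
      refine ⟨fun i => 0, ?_, fun i => i.elim0⟩
      have : F = MvPolynomial.C (MvPolynomial.coeff 0 F) := (F.eq_C_of_isEmpty)
      rw [this]
      simp only [MvPolynomial.eval_C]
      intro h
      apply hF
      rw [this, h, map_zero]
  | succ n ih =>
      intro F hF hdeg
      set g := finSuccEquiv ℤ n F with hg
      have hg0 : g ≠ 0 := by
        simp only [hg, Ne, EmbeddingLike.map_eq_zero_iff]
        exact hF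
      have hlc : g.coeff g.natDegree ≠ 0 := by
        rw [← Polynomial.leadingCoeff]
        exact Polynomial.leadingCoeff_ne_zero.mpr hg0
      have hlcdeg : (g.coeff g.natDegree).totalDegree ≤ M :=
        le_trans (le_trans (Nat.le_add_right _ _)
          (totalDegree_coeff_finSuccEquiv_add_le F _ hlc)) hdeg
      obtain ⟨y, hy, hyb⟩ := ih (g.coeff g.natDegree) hlc hlcdeg
      set p : Polynomial ℤ := g.map (MvPolynomial.eval y) with hp
      have hpc : p.coeff g.natDegree ≠ 0 := by
        simpa [hp, Polynomial.coeff_map] using hy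
      have hp0 : p ≠ 0 := fun h => hpc (by simp [h])
      have hpdeg : p.natDegree ≤ M := by
        refine le_trans Polynomial.natDegree_map_le ?_
        rw [natDegree_finSuccEquiv]
        exact le_trans (degreeOf_le_totalDegree F 0) hdeg
      -- candidate set
      set k : ℤ := ((M : ℤ) + 2) / 2 with hk
      set S : Finset ℤ := (Finset.Icc (-k) k).erase 0 with hS
      have hkpos : 1 ≤ k := by
        have : (1 : ℤ) ≤ M := by exact_mod_cast hM
        omega
      have hScard : M < S.card := by
        rw [hS, Finset.card_erase_of_mem (by simp [Finset.mem_Icc]; omega)]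
        rw [Int.card_Icc]
        have : (1 : ℤ) ≤ M := by exact_mod_cast hM
        have h2 : 2 * k ≥ (M : ℤ) + 1 := by omega
        have : ((M : ℤ) + 1).toNat ≤ (k - -k + 1).toNat - 1 := by omega
        omega
      have hroots : ¬ S ⊆ p.roots.toFinset := by
        intro hsub
        have h1 : S.card ≤ p.roots.toFinset.card := Finset.card_le_card hsub
        have h2 : p.roots.toFinset.card ≤ p.roots.card := p.roots.toFinset_card_le
        have h3 : (p.roots.card : ℕ) ≤ p.natDegree := p.card_roots'
        omega
      obtain ⟨s, hsS, hsroot⟩ := Finset.not_subset.mp hroots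
      have hps : p.eval s ≠ 0 := by
        intro h
        exact hsroot (Multiset.mem_toFinset.mpr (Polynomial.mem_roots'.mpr ⟨hp0, h⟩))
      refine ⟨Fin.cons s y, ?_, ?_⟩
      · rw [eval_eq_eval_mv_eval']
        exact hps
      · intro i
        refine Fin.cases ?_ ?_ i
        · simp only [Fin.cons_zero]
          rw [hS] at hsS
          simp only [Finset.mem_erase, Finset.mem_Icc] at hsS
          constructor
          · exact hsS.1
          · have hkle : 2 * k ≤ (M : ℤ) + 2 := by omega
            rcases hsS with ⟨_, h1, h2⟩
            have habs : |s| ≤ k := abs_le.mpr ⟨h1, h2⟩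
            omega
        · intro j
          simpa using hyb j

theorem stmt_3 (N M : ℕ) (hN : 1 ≤ N) (hM : 1 ≤ M) (F : MvPolynomial (Fin N) ℤ)
    (hF : F ≠ 0) (hdeg : F.totalDegree = M) :
    ∃ x : Fin N → ℤ, (∀ i, x i ≠ 0) ∧ MvPolynomial.eval x F ≠ 0 ∧
      ∀ i, 2 * |x i| ≤ (M : ℤ) + 2 := by
  obtain ⟨x, hx, hxb⟩ := aux_stmt_3 M hM N F hF (le_of_eq hdeg)
  exact ⟨x, fun i => (hxb i).1, hx, fun i => (hxb i).2⟩
end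

section
/- Let F ∈ Z[X_1,...,X_N] be a non-zero homogeneous polynomial of degree M ≥ 1 in N ≥ 2 variables. Then there exists a point x ∈ Z^N with F(x) ≠ 0 and L(x) = Σ_{i=1}^N |x_i| ≤ (M+2)^2/8. -/
open MvPolynomial

lemma one_var_aux (g : Polynomial ℤ) (hg : g ≠ 0) :
    ∃ a : ℤ, 0 ≤ a ∧ a ≤ (g.natDegree : ℤ) ∧ g.eval a ≠ 0 := by
  by_contra h
  push_neg at h
  have hsub : Finset.Icc (0 : ℤ) g.natDegree ⊆ g.roots.toFinset := by
    intro a ha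
    rw [Finset.mem_Icc] at ha
    rw [Multiset.mem_toFinset, Polynomial.mem_roots hg]
    exact h a ha.1 ha.2
  have h1 : (Finset.Icc (0 : ℤ) g.natDegree).card ≤ g.roots.toFinset.card :=
    Finset.card_le_card hsub
  have h2 : g.roots.toFinset.card ≤ Multiset.card g.roots :=
    Multiset.toFinset_card_le _
  have h3 : Multiset.card g.roots ≤ g.natDegree := Polynomial.card_roots' g
  rw [Int.card_Icc] at h1
  omega

lemma grid_aux : ∀ (n : ℕ) (F : MvPolynomial (Fin n) ℤ), F ≠ 0 →
    ∃ x : Fin n → ℤ, MvPolynomial.eval x F ≠ 0 ∧ (∀ i, 0 ≤ x i) ∧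
      ∑ i, x i ≤ (F.totalDegree : ℤ) := by
  intro n
  induction n with
  | zero =>
    intro F hF
    obtain ⟨c, rfl⟩ := MvPolynomial.C_surjective (Fin 0) F
    refine ⟨fun i => 0, ?_, fun i => le_refl 0, by simp⟩
    simpa using fun hc => hF (by rw [hc]; simp)
  | succ n ih =>
    intro F hF
    set P := MvPolynomial.finSuccEquiv ℤ n F with hP
    have hPne : P ≠ 0 := by
      simpa [hP] using (map_ne_zero_iff _ (MvPolynomial.finSuccEquiv ℤ n).injective).2 hF
    have hlc : P.coeff P.natDegree ≠ 0 := Polynomial.leadingCoeff_ne_zero.2 hPne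
    obtain ⟨y, hy, hynn, hysum⟩ := ih _ hlc
    set g : Polynomial ℤ := P.map (MvPolynomial.eval y) with hg
    have hgc : g.coeff P.natDegree ≠ 0 := by
      rwa [hg, Polynomial.coeff_map]
    have hgne : g ≠ 0 := fun h0 => hgc (by rw [h0]; simp)
    have hgdeg : g.natDegree ≤ P.natDegree := Polynomial.natDegree_map_le
    obtain ⟨a, hann, hadeg, haev⟩ := one_var_aux g hgne
    refine ⟨Fin.cons a y, ?_, ?_, ?_⟩
    · rwa [MvPolynomial.eval_eq_eval_mv_eval']
    · intro i
      refine Fin.cases ?_ ?_ i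
      · exact hann
      · exact fun j => hynn j
    · rw [Fin.sum_cons]
      have htd : (P.coeff P.natDegree).totalDegree + P.natDegree ≤ F.totalDegree :=
        MvPolynomial.totalDegree_coeff_finSuccEquiv_add_le F P.natDegree hlc
      have : a ≤ (P.natDegree : ℤ) := le_trans hadeg (by exact_mod_cast hgdeg)
      have h2 : ∑ i, y i ≤ ((P.coeff P.natDegree).totalDegree : ℤ) := hysum
      push_cast at htd ⊢
      omega

theorem stmt_5 (N M : ℕ) (hN : 2 ≤ N) (hM : 1 ≤ M) (F : MvPolynomial (Fin N) ℤ)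
    (hF : F ≠ 0) (hhom : F.IsHomogeneous M) :
    ∃ x : Fin N → ℤ, MvPolynomial.eval x F ≠ 0 ∧
      8 * ∑ i, |x i| ≤ ((M : ℤ) + 2) ^ 2 := by
  obtain ⟨x, hx, hnn, hsum⟩ := grid_aux N F hF
  refine ⟨x, hx, ?_⟩
  have htd : F.totalDegree = M := hhom.totalDegree hF
  have hsum' : ∑ i, |x i| ≤ (M : ℤ) := by
    rw [← htd]
    calc ∑ i, |x i| = ∑ i, x i := by
          exact Finset.sum_congr rfl fun i _ => abs_of_nonneg (hnn i)
      _ ≤ (F.totalDegree : ℤ) := hsum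
  nlinarith [hsum', sq_nonneg ((M : ℤ) - 2)]
end

section
/- Let F ∈ Z[X_1,...,X_N] be a non-zero homogeneous polynomial of degree M ≥ 1 in N ≥ 2 variables. Then there exists x ∈ Z^N with F(x) ≠ 0 and Σ_i |x_i| ≤ ⌊((M+2)/2) · min{N, (M+2)/4}⌋. -/
open MvPolynomial

lemma univ_nonzero_point (q : Polynomial ℤ) (hq : q ≠ 0) (k : ℕ) (hk : q.natDegree ≤ k) :
    ∃ t : ℕ, t ≤ k ∧ Polynomial.eval (t : ℤ) q ≠ 0 := by
  by_contra h
  push_neg at h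
  have hsub : (Finset.range (k+1)).image (fun n : ℕ => (n : ℤ)) ⊆ q.roots.toFinset := by
    intro t ht
    simp only [Finset.mem_image, Finset.mem_range] at ht
    obtain ⟨n, hn, rfl⟩ := ht
    rw [Multiset.mem_toFinset, Polynomial.mem_roots hq]
    exact h n (Nat.lt_succ_iff.mp hn)
  have h1 : k + 1 ≤ q.roots.toFinset.card := by
    have := Finset.card_le_card hsub
    rwa [Finset.card_image_of_injective _ (fun a b h => by exact_mod_cast h), Finset.card_range] at this
  have h2 := Multiset.toFinset_card_le q.roots
  have h3 := q.card_roots' 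
  omega

lemma simplex_point : ∀ (n M : ℕ) (F : MvPolynomial (Fin n) ℤ), F ≠ 0 → F.totalDegree ≤ M →
    ∃ x : Fin n → ℤ, (∀ i, 0 ≤ x i) ∧ (∑ i, x i) ≤ (M : ℤ) ∧ MvPolynomial.eval x F ≠ 0 := by
  intro n
  induction n with
  | zero =>
    intro M F hF _
    refine ⟨0, fun i => le_rfl, by simp, ?_⟩
    rw [MvPolynomial.eval_zero]
    intro h
    apply hF
    rw [MvPolynomial.eq_C_of_isEmpty F, show MvPolynomial.coeff 0 F = constantCoeff F from rfl, h, map_zero]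
  | succ n ih =>
    intro M F hF hdeg
    set p := finSuccEquiv ℤ n F with hp
    have hp0 : p ≠ 0 := by
      simpa [hp] using (map_ne_zero_iff _ (finSuccEquiv ℤ n).injective).mpr hF
    set k := p.natDegree with hk
    have hlc : p.coeff k ≠ 0 := Polynomial.leadingCoeff_ne_zero.mpr hp0
    have hkM : totalDegree (p.coeff k) + k ≤ M :=
      le_trans (totalDegree_coeff_finSuccEquiv_add_le F k hlc) hdeg
    obtain ⟨x', hx'pos, hx'sum, hx'ne⟩ := ih (M - k) (p.coeff k) hlc (by omega)
    set q := p.map (eval x') with hq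
    have hq0 : q ≠ 0 := fun h => hx'ne (by
      have := congrArg (fun r => r.coeff k) h
      simpa [hq, Polynomial.coeff_map] using this)
    have hqdeg : q.natDegree ≤ k := Polynomial.natDegree_map_le
    obtain ⟨t, htk, htne⟩ := univ_nonzero_point q hq0 k hqdeg
    refine ⟨Fin.cons (t : ℤ) x', ?_, ?_, ?_⟩
    · intro i
      refine Fin.cases ?_ ?_ i
      · simp
      · intro j; simpa using hx'pos j
    · rw [Fin.sum_cons]
      have : (t : ℤ) ≤ (k : ℤ) := by exact_mod_cast htk
      have h2 : (M - k : ℕ) ≤ (M : ℤ) - k := by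
        push_cast [Nat.cast_sub (by omega : k ≤ M)]; omega
      omega
    · rwa [eval_eq_eval_mv_eval']

theorem stmt_6 (N M : ℕ) (hN : 2 ≤ N) (hM : 1 ≤ M) (F : MvPolynomial (Fin N) ℤ)
    (hF : F ≠ 0) (hhom : F.IsHomogeneous M) :
    ∃ x : Fin N → ℤ, MvPolynomial.eval x F ≠ 0 ∧
      ∑ i, |x i| ≤ ⌊(((M : ℝ) + 2) / 2) * min (N : ℝ) (((M : ℝ) + 2) / 4)⌋ := by
  obtain ⟨x, hpos, hsum, hne⟩ := simplex_point N M F hF hhom.totalDegree_le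
  refine ⟨x, hne, ?_⟩
  have h1 : ∑ i, |x i| = ∑ i, x i := by
    exact Finset.sum_congr rfl fun i _ => abs_of_nonneg (hpos i)
  rw [h1]
  refine le_trans hsum (Int.le_floor.mpr ?_)
  push_cast
  have hm : (1 : ℝ) ≤ (M : ℝ) := by exact_mod_cast hM
  have hn : (2 : ℝ) ≤ (N : ℝ) := by exact_mod_cast hN
  rcases min_cases ((N : ℝ)) (((M : ℝ) + 2) / 4) with ⟨h, _⟩ | ⟨h, _⟩ <;> rw [h] <;> nlinarith [sq_nonneg ((M:ℝ) - 2)]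
end

section
/- Let A be an N×N real upper-triangular matrix with all diagonal entries equal to 1, and let u_m < v_m be reals. Then Π_{m=1}^N ⌊v_m − u_m⌋ ≤ |{ξ ∈ Z^N : u_m < (Aξ)_m ≤ v_m for all m}| ≤ Π_{m=1}^N (⌊v_m − u_m⌋ + 1). -/
noncomputable def cSum {N : ℕ} (A : Matrix (Fin N) (Fin N) ℝ) (ξ : Fin N → ℤ) (m : Fin N) : ℝ :=
  ∑ j ∈ Finset.univ.filter (fun j => m < j), A m j * (ξ j : ℝ)

lemma mulVec_eq {N : ℕ} (A : Matrix (Fin N) (Fin N) ℝ)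
    (htri : ∀ i j, j < i → A i j = 0) (hdiag : ∀ i, A i i = 1)
    (ξ : Fin N → ℤ) (m : Fin N) :
    A.mulVec (fun i => (ξ i : ℝ)) m = ξ m + cSum A ξ m := by
  have : A.mulVec (fun i => (ξ i : ℝ)) m = ∑ j, A m j * (ξ j : ℝ) := by
    simp [Matrix.mulVec, dotProduct]
  rw [this, ← Finset.sum_filter_add_sum_filter_not Finset.univ (fun j => m < j), cSum, add_comm]
  congr 1
  rw [Finset.sum_eq_single m]
  · simp [hdiag]
  · intro j hj hne
    simp only [Finset.mem_filter, not_lt] at hj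
    rw [htri m j (lt_of_le_of_ne hj.2 hne), zero_mul]
  · simp

noncomputable def build {N : ℕ} (A : Matrix (Fin N) (Fin N) ℝ) (u : Fin N → ℝ)
    (k : Fin N → ℤ) : Fin N → ℤ
  | m => ⌊u m - ∑ j ∈ (Finset.univ.filter (fun j => m < j)).attach,
      A m j.1 * ((build A u k j.1 : ℤ) : ℝ)⌋ + 1 + k m
termination_by m => N - m.1
decreasing_by
  have := j.2
  simp only [Finset.mem_filter, Finset.mem_univ, true_and] at this
  have h1 : (m : ℕ) < j.1 := this
  have h2 : (j.1 : ℕ) < N := j.1.2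
  omega

lemma build_eq {N : ℕ} (A : Matrix (Fin N) (Fin N) ℝ) (u : Fin N → ℝ)
    (k : Fin N → ℤ) (m : Fin N) :
    build A u k m = ⌊u m - cSum A (build A u k) m⌋ + 1 + k m := by
  have h : ∑ j ∈ (Finset.univ.filter (fun j => m < j)).attach,
      A m j.1 * ((build A u k j.1 : ℤ) : ℝ) = cSum A (build A u k) m := by
    rw [cSum]
    exact Finset.sum_attach _ (fun j => A m j * ((build A u k j : ℤ) : ℝ))
  rw [build, h]

noncomputable def phiMap {N : ℕ} (A : Matrix (Fin N) (Fin N) ℝ) (u : Fin N → ℝ)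
    (ξ : Fin N → ℤ) (m : Fin N) : ℤ :=
  ξ m - ⌊u m - cSum A ξ m⌋ - 1

lemma phi_inj {N : ℕ} (A : Matrix (Fin N) (Fin N) ℝ) (u : Fin N → ℝ) :
    Function.Injective (phiMap A u) := by
  intro ξ η h
  have key : ∀ t : ℕ, ∀ m : Fin N, N - m.1 ≤ t → ξ m = η m := by
    intro t
    induction t with
    | zero => intro m hm; have := m.2; omega
    | succ t ih =>
      intro m _
      have hc : cSum A ξ m = cSum A η m := by
        unfold cSum
        apply Finset.sum_congr rfl
        intro j hj
        simp only [Finset.mem_filter, Finset.mem_univ, true_and] at hj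
        rw [ih j (by have h1 : (m : ℕ) < j := hj; have := j.2; omega)]
      have hm := congrFun h m
      unfold phiMap at hm
      rw [hc] at hm
      omega
  funext m
  exact key N m (by omega)

lemma build_inj {N : ℕ} (A : Matrix (Fin N) (Fin N) ℝ) (u : Fin N → ℝ) :
    Function.Injective (build A u) := by
  intro k k' h
  funext m
  have h1 := build_eq A u k m
  have h2 := build_eq A u k' m
  rw [h] at h1
  rw [h1] at h2
  omega

lemma phi_mem {N : ℕ} (A : Matrix (Fin N) (Fin N) ℝ)
    (htri : ∀ i j, j < i → A i j = 0) (hdiag : ∀ i, A i i = 1)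
    (u v : Fin N → ℝ) (ξ : Fin N → ℤ)
    (hξ : ∀ m, u m < A.mulVec (fun i => (ξ i : ℝ)) m ∧
      A.mulVec (fun i => (ξ i : ℝ)) m ≤ v m) (m : Fin N) :
    0 ≤ phiMap A u ξ m ∧ phiMap A u ξ m ≤ ⌊v m - u m⌋ := by
  have hmv := mulVec_eq A htri hdiag ξ m
  obtain ⟨h1, h2⟩ := hξ m
  rw [hmv] at h1 h2
  unfold phiMap
  set c := cSum A ξ m with hc
  have hlow : ⌊u m - c⌋ < ξ m := Int.floor_lt.mpr (by push_cast; linarith)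
  have hup : ξ m ≤ ⌊v m - c⌋ := Int.le_floor.mpr (by push_cast; linarith)
  have hfl : ⌊v m - c⌋ < ⌊u m - c⌋ + ⌊v m - u m⌋ + 2 := by
    apply Int.floor_lt.mpr
    have a := Int.lt_floor_add_one (u m - c)
    have b := Int.lt_floor_add_one (v m - u m)
    push_cast
    linarith
  omega

lemma build_mem {N : ℕ} (A : Matrix (Fin N) (Fin N) ℝ)
    (htri : ∀ i j, j < i → A i j = 0) (hdiag : ∀ i, A i i = 1)
    (u v : Fin N → ℝ) (k : Fin N → ℤ)
    (hk : ∀ m, 0 ≤ k m ∧ k m < ⌊v m - u m⌋) (m : Fin N) :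
    u m < A.mulVec (fun i => ((build A u k i : ℤ) : ℝ)) m ∧
      A.mulVec (fun i => ((build A u k i : ℤ) : ℝ)) m ≤ v m := by
  have hmv := mulVec_eq A htri hdiag (build A u k) m
  have heq := build_eq A u k m
  set c := cSum A (build A u k) m with hc
  obtain ⟨hk0, hk1⟩ := hk m
  have a := Int.lt_floor_add_one (u m - c)
  have hadd : ⌊u m - c⌋ + ⌊v m - u m⌋ ≤ ⌊v m - c⌋ := by
    apply Int.le_floor.mpr
    have b1 := Int.floor_le (u m - c)
    have b2 := Int.floor_le (v m - u m)
    push_cast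
    linarith
  have hfl : (⌊v m - c⌋ : ℝ) ≤ v m - c := Int.floor_le _
  constructor
  · rw [hmv, heq]
    have hk0' : (0 : ℝ) ≤ (k m : ℝ) := by exact_mod_cast hk0
    push_cast
    linarith
  · rw [hmv, heq]
    have : (⌊u m - c⌋ + 1 + k m : ℤ) ≤ ⌊v m - c⌋ := by omega
    have h3 : ((⌊u m - c⌋ + 1 + k m : ℤ) : ℝ) ≤ ((⌊v m - c⌋ : ℤ) : ℝ) := by
      exact_mod_cast this
    push_cast at h3 ⊢
    linarith

theorem stmt_8 (N : ℕ) (A : Matrix (Fin N) (Fin N) ℝ)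
    (htri : ∀ i j, j < i → A i j = 0) (hdiag : ∀ i, A i i = 1)
    (u v : Fin N → ℝ) (huv : ∀ m, u m < v m) :
    (∏ m, ⌊v m - u m⌋) ≤
      (({ξ : Fin N → ℤ | ∀ m, u m < A.mulVec (fun i => (ξ i : ℝ)) m ∧
        A.mulVec (fun i => (ξ i : ℝ)) m ≤ v m}).ncard : ℤ) ∧
    (({ξ : Fin N → ℤ | ∀ m, u m < A.mulVec (fun i => (ξ i : ℝ)) m ∧
        A.mulVec (fun i => (ξ i : ℝ)) m ≤ v m}).ncard : ℤ) ≤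
      ∏ m, (⌊v m - u m⌋ + 1) := by
  
  set S : Set (Fin N → ℤ) := {ξ : Fin N → ℤ | ∀ m, u m < A.mulVec (fun i => (ξ i : ℝ)) m ∧
        A.mulVec (fun i => (ξ i : ℝ)) m ≤ v m} with hS
  have hfl0 : ∀ m, 0 ≤ ⌊v m - u m⌋ := fun m =>
    Int.floor_nonneg.mpr (le_of_lt (sub_pos.mpr (huv m)))
  -- upper bound
  set T : Finset (Fin N → ℤ) := Fintype.piFinset (fun m => Finset.Icc (0 : ℤ) ⌊v m - u m⌋) with hT
  have himg : phiMap A u '' S ⊆ ↑T := by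
    rintro _ ⟨ξ, hξ, rfl⟩
    rw [Finset.mem_coe, hT, Fintype.mem_piFinset]
    intro m
    rw [Finset.mem_Icc]
    exact phi_mem A htri hdiag u v ξ hξ m
  have himgfin : (phiMap A u '' S).Finite := Set.Finite.subset T.finite_toSet himg
  have hSfin : S.Finite := Set.Finite.of_finite_image himgfin ((phi_inj A u).injOn)
  have hcard1 : S.ncard = (phiMap A u '' S).ncard :=
    (Set.ncard_image_of_injective S (phi_inj A u)).symm
  have hTcard : (T.card : ℤ) = ∏ m, (⌊v m - u m⌋ + 1) := by
    rw [hT, Fintype.card_piFinset]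
    push_cast
    apply Finset.prod_congr rfl
    intro m _
    rw [Int.card_Icc]
    have : (0 : ℤ) ≤ ⌊v m - u m⌋ + 1 - 0 := by have := hfl0 m; omega
    rw [Int.toNat_of_nonneg this]
    ring
  have hupper : (S.ncard : ℤ) ≤ ∏ m, (⌊v m - u m⌋ + 1) := by
    rw [hcard1, ← hTcard]
    have := Set.ncard_le_ncard himg T.finite_toSet
    rw [Set.ncard_coe_finset] at this
    exact_mod_cast this
  -- lower bound
  set B : Finset (Fin N → ℤ) := Fintype.piFinset (fun m => Finset.Ico (0 : ℤ) ⌊v m - u m⌋) with hB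
  have himg2 : build A u '' ↑B ⊆ S := by
    rintro _ ⟨k, hk, rfl⟩
    rw [Finset.mem_coe, hB, Fintype.mem_piFinset] at hk
    simp only [Finset.mem_Ico] at hk
    intro m
    exact build_mem A htri hdiag u v k hk m
  have hBcard : (B.card : ℤ) = ∏ m, ⌊v m - u m⌋ := by
    rw [hB, Fintype.card_piFinset]
    push_cast
    apply Finset.prod_congr rfl
    intro m _
    rw [Int.card_Ico]
    rw [Int.toNat_of_nonneg (by have := hfl0 m; omega)]
    ring
  have hlower : ∏ m, ⌊v m - u m⌋ ≤ (S.ncard : ℤ) := by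
    rw [← hBcard]
    have h1 : (build A u '' ↑B).ncard = B.card := by
      rw [Set.ncard_image_of_injective _ (build_inj A u), Set.ncard_coe_finset]
    have h2 := Set.ncard_le_ncard himg2 hSfin
    rw [h1] at h2
    exact_mod_cast h2
  exact ⟨hlower, hupper⟩
end

section
/- Let A be an N×N real upper-triangular matrix with positive diagonal entries a_{11},...,a_{NN}, and let u_m < v_m be reals. Then Π_{m=1}^N ⌊(v_m − u_m)/a_{mm}⌋ ≤ |{ξ ∈ Z^N : u_m < (Aξ)_m ≤ v_m for all m}| ≤ Π_{m=1}^N (⌊(v_m − u_m)/a_{mm}⌋ + 1). -/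
private lemma aux_count : ∀ (N : ℕ) (A : Matrix (Fin N) (Fin N) ℝ)
    (_ : ∀ i j, j < i → A i j = 0) (_ : ∀ i, 0 < A i i)
    (u v : Fin N → ℝ) (_ : ∀ m, u m < v m),
    ({ξ : Fin N → ℤ | ∀ m, u m < A.mulVec (fun i => (ξ i : ℝ)) m ∧
        A.mulVec (fun i => (ξ i : ℝ)) m ≤ v m}).Finite ∧
    (∏ m, ⌊(v m - u m) / A m m⌋) ≤
      (({ξ : Fin N → ℤ | ∀ m, u m < A.mulVec (fun i => (ξ i : ℝ)) m ∧
        A.mulVec (fun i => (ξ i : ℝ)) m ≤ v m}).ncard : ℤ) ∧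
    (({ξ : Fin N → ℤ | ∀ m, u m < A.mulVec (fun i => (ξ i : ℝ)) m ∧
        A.mulVec (fun i => (ξ i : ℝ)) m ≤ v m}).ncard : ℤ) ≤
      ∏ m, (⌊(v m - u m) / A m m⌋ + 1) := by
  intro N
  induction N with
  | zero =>
    intro A htri hdiag u v huv
    have hS : {ξ : Fin 0 → ℤ | ∀ m, u m < A.mulVec (fun i => (ξ i : ℝ)) m ∧
        A.mulVec (fun i => (ξ i : ℝ)) m ≤ v m} = Set.univ := by
      ext ξ
      constructor
      · intro _; trivial
      · intro _ m; exact m.elim0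
    rw [hS]
    refine ⟨Set.finite_univ, ?_, ?_⟩ <;> simp [Set.ncard_univ, Nat.card_unique]
  | succ N IH =>
    intro A htri hdiag u v huv
    set B : Matrix (Fin N) (Fin N) ℝ := fun i j => A i.succ j.succ with hB
    have htri' : ∀ i j, j < i → B i j = 0 := fun i j h =>
      htri i.succ j.succ (Fin.succ_lt_succ_iff.mpr h)
    have hdiag' : ∀ i, 0 < B i i := fun i => hdiag i.succ
    set u' : Fin N → ℝ := fun m => u m.succ with hu'
    set v' : Fin N → ℝ := fun m => v m.succ with hv'
    have huv' : ∀ m, u' m < v' m := fun m => huv m.succ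
    obtain ⟨hS'fin, hS'lo, hS'hi⟩ := IH B htri' hdiag' u' v' huv'
    set S' : Set (Fin N → ℤ) := {ξ : Fin N → ℤ | ∀ m, u' m < B.mulVec (fun i => (ξ i : ℝ)) m ∧
        B.mulVec (fun i => (ξ i : ℝ)) m ≤ v' m} with hS'
    set c : (Fin N → ℤ) → ℝ := fun η => ∑ j, A 0 j.succ * (η j : ℝ) with hc
    set a : (Fin N → ℤ) → ℝ := fun η => (u 0 - c η) / A 0 0 with ha
    set b : (Fin N → ℤ) → ℝ := fun η => (v 0 - c η) / A 0 0 with hb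
    set L : ℝ := (v 0 - u 0) / A 0 0 with hL
    have hA00 : (0:ℝ) < A 0 0 := hdiag 0
    have hLpos : 0 < L := div_pos (by linarith [huv 0]) hA00
    have hLfloor : 0 ≤ ⌊L⌋ := Int.floor_nonneg.mpr hLpos.le
    have hab : ∀ η, b η = a η + L := by
      intro η; rw [ha, hb, hL]; ring
    -- row computations
    have hrow : ∀ (ξ : Fin (N+1) → ℤ) (m : Fin N),
        A.mulVec (fun i => (ξ i : ℝ)) m.succ
          = B.mulVec (fun i => ((ξ i.succ : ℤ) : ℝ)) m := by
      intro ξ m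
      simp only [Matrix.mulVec, dotProduct]
      rw [Fin.sum_univ_succ]
      rw [htri m.succ 0 (Fin.succ_pos m)]
      simp [hB]
    have h0 : ∀ (ξ : Fin (N+1) → ℤ),
        A.mulVec (fun i => (ξ i : ℝ)) 0 = A 0 0 * (ξ 0 : ℝ) + c (fun i => ξ i.succ) := by
      intro ξ
      simp only [Matrix.mulVec, dotProduct, hc]
      rw [Fin.sum_univ_succ]
    set S : Set (Fin (N+1) → ℤ) := {ξ : Fin (N+1) → ℤ |
        ∀ m, u m < A.mulVec (fun i => (ξ i : ℝ)) m ∧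
        A.mulVec (fun i => (ξ i : ℝ)) m ≤ v m} with hS
    -- membership characterization
    have hmem : ∀ ξ : Fin (N+1) → ℤ, ξ ∈ S ↔
        (fun i => ξ i.succ) ∈ S' ∧ ⌊a (fun i => ξ i.succ)⌋ < ξ 0 ∧ ξ 0 ≤ ⌊b (fun i => ξ i.succ)⌋ := by
      intro ξ
      rw [hS, Set.mem_setOf_eq, Fin.forall_fin_succ]
      have h1 : (u 0 < A.mulVec (fun i => (ξ i : ℝ)) 0 ∧ A.mulVec (fun i => (ξ i : ℝ)) 0 ≤ v 0)
          ↔ (⌊a (fun i => ξ i.succ)⌋ < ξ 0 ∧ ξ 0 ≤ ⌊b (fun i => ξ i.succ)⌋) := by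
        rw [h0 ξ, Int.floor_lt, Int.le_floor, ha, hb]
        rw [div_lt_iff₀ hA00, le_div_iff₀ hA00]
        constructor
        · rintro ⟨h₁, h₂⟩; constructor <;> nlinarith
        · rintro ⟨h₁, h₂⟩; constructor <;> nlinarith
      have h2 : (∀ m : Fin N, u m.succ < A.mulVec (fun i => (ξ i : ℝ)) m.succ ∧
            A.mulVec (fun i => (ξ i : ℝ)) m.succ ≤ v m.succ) ↔ (fun i => ξ i.succ) ∈ S' := by
        rw [hS', Set.mem_setOf_eq]
        constructor
        · intro h m; rw [← hrow ξ m]; exact h m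
        · intro h m; rw [hrow ξ m]; exact h m
      rw [h1, h2]; tauto
    -- floor bounds on fibers
    have hfib_lo : ∀ η, ⌊a η⌋ + ⌊L⌋ ≤ ⌊b η⌋ := by
      intro η
      rw [hab η]
      refine Int.le_floor.mpr ?_
      push_cast
      exact add_le_add (Int.floor_le _) (Int.floor_le _)
    have hfib_hi : ∀ η, ⌊b η⌋ ≤ ⌊a η⌋ + ⌊L⌋ + 1 := by
      intro η
      have : ⌊b η⌋ < ⌊a η⌋ + ⌊L⌋ + 2 := by
        rw [hab η]
        refine Int.floor_lt.mpr ?_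
        push_cast
        linarith [Int.lt_floor_add_one (a η), Int.lt_floor_add_one L]
      omega
    -- upper bound and finiteness via injection into Ioc 0 (⌊L⌋+1) ×ˢ S'
    have hgmaps : ∀ ξ ∈ S, (fun ξ : Fin (N+1) → ℤ =>
        ((ξ 0 - ⌊a (fun i : Fin N => ξ i.succ)⌋ : ℤ), fun i : Fin N => ξ i.succ)) ξ
          ∈ (Set.Ioc (0:ℤ) (⌊L⌋+1)) ×ˢ S' := by
      intro ξ hξ
      obtain ⟨hη, h₁, h₂⟩ := (hmem ξ).mp hξ
      have := hfib_hi (fun i => ξ i.succ)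
      show ((ξ 0 - ⌊a (fun i : Fin N => ξ i.succ)⌋ : ℤ), fun i : Fin N => ξ i.succ)
        ∈ (Set.Ioc (0:ℤ) (⌊L⌋+1)) ×ˢ S'
      refine Set.mem_prod.mpr ⟨Set.mem_Ioc.mpr ⟨by omega, by omega⟩, hη⟩
    have hginj : Set.InjOn (fun ξ : Fin (N+1) → ℤ =>
        ((ξ 0 - ⌊a (fun i : Fin N => ξ i.succ)⌋ : ℤ), fun i : Fin N => ξ i.succ)) S := by
      intro ξ hξ ζ hζ h
      have h2 : (fun i : Fin N => ξ i.succ) = (fun i : Fin N => ζ i.succ) := congrArg Prod.snd h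
      have h1' : ξ 0 - ⌊a (fun i : Fin N => ξ i.succ)⌋ = ζ 0 - ⌊a (fun i : Fin N => ζ i.succ)⌋ :=
        congrArg Prod.fst h
      rw [h2] at h1'
      have h1 : ξ 0 = ζ 0 := by omega
      funext i
      refine Fin.cases h1 (fun j => ?_) i
      exact congrFun h2 j
    have htarfin : ((Set.Ioc (0:ℤ) (⌊L⌋+1)) ×ˢ S').Finite :=
      (Set.finite_Ioc _ _).prod hS'fin
    have hSfin : S.Finite :=
      Set.Finite.of_finite_image (htarfin.subset (Set.image_subset_iff.mpr hgmaps)) hginj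
    have hprod_card : ∀ n : ℤ, 0 ≤ n → ((Set.Ioc (0:ℤ) n) ×ˢ S').ncard = n.toNat * S'.ncard := by
      intro n hn
      rw [← Nat.card_coe_set_eq, Nat.card_congr (Equiv.Set.prod _ _), Nat.card_prod]
      rw [Nat.card_coe_set_eq, Nat.card_coe_set_eq]
      congr 1
      rw [← Finset.coe_Ioc, Set.ncard_coe_finset, Int.card_Ioc]
      simp
    have hupper : (S.ncard : ℤ) ≤ (⌊L⌋ + 1) * S'.ncard := by
      have := Set.ncard_le_ncard_of_injOn _ hgmaps hginj htarfin
      rw [hprod_card (⌊L⌋+1) (by omega)] at this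
      have h2 : ((⌊L⌋+1).toNat : ℤ) = ⌊L⌋ + 1 := by omega
      calc (S.ncard : ℤ) ≤ ((⌊L⌋+1).toNat * S'.ncard : ℕ) := by exact_mod_cast this
        _ = (⌊L⌋ + 1) * S'.ncard := by push_cast [h2]; ring
    -- lower bound via injection from S' ×ˢ Ioc 0 ⌊L⌋ into S
    have hfmaps : ∀ p ∈ S' ×ˢ (Set.Ioc (0:ℤ) ⌊L⌋),
        (fun p : (Fin N → ℤ) × ℤ => (Fin.cons (⌊a p.1⌋ + p.2) p.1 : Fin (N+1) → ℤ)) p ∈ S := by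
      rintro ⟨η, k⟩ ⟨hη, hk1, hk2⟩
      rw [hmem]
      have htail : (fun i => (Fin.cons (⌊a η⌋ + k) η : Fin (N+1) → ℤ) i.succ) = η := by
        funext i; simp
      refine ⟨by rw [htail]; exact hη, ?_, ?_⟩
      · rw [htail]; simp; omega
      · rw [htail]
        simp only [Fin.cons_zero]
        have := hfib_lo η
        omega
    have hfinj : Set.InjOn (fun p : (Fin N → ℤ) × ℤ => (Fin.cons (⌊a p.1⌋ + p.2) p.1 : Fin (N+1) → ℤ))
        (S' ×ˢ (Set.Ioc (0:ℤ) ⌊L⌋)) := by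
      rintro ⟨η, k⟩ _ ⟨η', k'⟩ _ h
      have htail : η = η' := by
        funext i
        have := congrFun h i.succ
        simpa using this
      have hhead := congrFun h 0
      simp only [Fin.cons_zero, htail] at hhead
      simp [htail]
      omega
    have hlower : ⌊L⌋ * (S'.ncard : ℤ) ≤ S.ncard := by
      have := Set.ncard_le_ncard_of_injOn _ hfmaps hfinj hSfin
      rw [← Nat.card_coe_set_eq, Nat.card_congr (Equiv.Set.prod _ _), Nat.card_prod,
        Nat.card_coe_set_eq, Nat.card_coe_set_eq,
        ← Finset.coe_Ioc, Set.ncard_coe_finset, Int.card_Ioc] at this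
      have h2 : ((⌊L⌋ - 0).toNat : ℤ) = ⌊L⌋ := by omega
      calc ⌊L⌋ * (S'.ncard : ℤ) = ((S'.ncard * (⌊L⌋ - 0).toNat : ℕ) : ℤ) := by push_cast [h2]; ring
        _ ≤ S.ncard := by exact_mod_cast this
    -- assemble
    refine ⟨hSfin, ?_, ?_⟩
    · rw [Fin.prod_univ_succ]
      have : (∏ i : Fin N, ⌊(v i.succ - u i.succ) / A i.succ i.succ⌋) ≤ (S'.ncard : ℤ) := hS'lo
      have hL0 : ⌊(v 0 - u 0) / A 0 0⌋ = ⌊L⌋ := by rw [hL]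
      rw [hL0]
      have hprodnn : 0 ≤ ∏ i : Fin N, ⌊(v i.succ - u i.succ) / A i.succ i.succ⌋ := by
        apply Finset.prod_nonneg
        intro i _
        exact Int.floor_nonneg.mpr (div_nonneg (by linarith [huv i.succ]) (hdiag i.succ).le)
      calc ⌊L⌋ * ∏ i : Fin N, ⌊(v i.succ - u i.succ) / A i.succ i.succ⌋
          ≤ ⌊L⌋ * (S'.ncard : ℤ) := by
            apply mul_le_mul_of_nonneg_left this hLfloor
        _ ≤ S.ncard := hlower
    · rw [Fin.prod_univ_succ]
      have hL0 : ⌊(v 0 - u 0) / A 0 0⌋ = ⌊L⌋ := by rw [hL]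
      rw [hL0]
      calc (S.ncard : ℤ) ≤ (⌊L⌋ + 1) * S'.ncard := hupper
        _ ≤ (⌊L⌋ + 1) * ∏ i : Fin N, (⌊(v i.succ - u i.succ) / A i.succ i.succ⌋ + 1) := by
            apply mul_le_mul_of_nonneg_left hS'hi (by omega)

theorem stmt_9 (N : ℕ) (A : Matrix (Fin N) (Fin N) ℝ)
    (htri : ∀ i j, j < i → A i j = 0) (hdiag : ∀ i, 0 < A i i)
    (u v : Fin N → ℝ) (huv : ∀ m, u m < v m) :
    (∏ m, ⌊(v m - u m) / A m m⌋) ≤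
      (({ξ : Fin N → ℤ | ∀ m, u m < A.mulVec (fun i => (ξ i : ℝ)) m ∧
        A.mulVec (fun i => (ξ i : ℝ)) m ≤ v m}).ncard : ℤ) ∧
    (({ξ : Fin N → ℤ | ∀ m, u m < A.mulVec (fun i => (ξ i : ℝ)) m ∧
        A.mulVec (fun i => (ξ i : ℝ)) m ≤ v m}).ncard : ℤ) ≤
      ∏ m, (⌊(v m - u m) / A m m⌋ + 1) := by
  obtain ⟨_, h1, h2⟩ := aux_count N A htri hdiag u v huv
  exact ⟨h1, h2⟩
end

section
/- Let Λ ⊆ Z^N be a lattice of full rank N with determinant Δ, and let R ≥ 1. Then for every z ∈ R^N, the number of points of Λ in the translated cube C_R^N + z = {x : max_i |x_i − z_i| ≤ R} is at most (2R/Δ + 1)(2R + 1)^{N−1}. -/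
/-!
Project away the first coordinate with `Fin.tail : ℤ^(n+1) → ℤ^n`. The kernel part `Λ ∩ ℤ e₀`
is `m ℤ e₀`, and `[ℤ^(n+1) : Λ] = m · [ℤ^n : tail Λ]`. Two points of `Λ` over the same point of
`tail Λ` differ by a multiple of `m e₀`, so each fibre of the box meets `Λ` in at most
`2R/m + 1` points. Induction on `n`, together with
`(2R/d + 1)(2R/m + 1) ≤ (2R/(md) + 1)(2R + 1)` for `m, d ≥ 1`, gives the bound with the index of
`Λ` in place of `Δ`, and that index is `|det b|`.
-/

open Set

namespace AddSubgroup

variable {G K Q : Type*} [AddCommGroup G] [AddGroup K] [AddGroup Q]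

theorem index_eq_index_comap_mul_index_map (H : AddSubgroup G) {ι : K →+ G} {π : G →+ Q}
    (hπ : Function.Surjective π) (hexact : ι.range = π.ker) :
    H.index = (H.comap ι).index * (H.map π).index := by
  rw [index_comap, hexact, index_map, π.range_eq_top_of_surjective hπ, index_top, mul_one,
    ← relIndex_sup_left]
  exact (relIndex_mul_index le_sup_left).symm

end AddSubgroup

theorem Int.natCast_index_dvd_of_mem {A : AddSubgroup ℤ} {c : ℤ} (hc : c ∈ A) :
    (A.index : ℤ) ∣ c := by
  obtain ⟨a, rfl⟩ := Int.subgroup_cyclic A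
  rw [← AddSubgroup.zmultiples_eq_closure] at hc ⊢
  rw [Int.index_zmultiples]
  exact Int.natAbs_dvd.2 (Int.mem_zmultiples_iff.1 hc)

theorem Int.setOf_abs_sub_le_eq_Icc (w R : ℝ) :
    {k : ℤ | |(k : ℝ) - w| ≤ R} = Icc ⌈w - R⌉ ⌊w + R⌋ := by
  ext k
  simp only [mem_ofPred_eq, mem_Icc, abs_sub_le_iff, Int.ceil_le, Int.le_floor]
  constructor <;> rintro ⟨h₁, h₂⟩ <;> constructor <;> linarith

theorem Int.finite_setOf_abs_sub_le (w R : ℝ) : {k : ℤ | |(k : ℝ) - w| ≤ R}.Finite := by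
  rw [Int.setOf_abs_sub_le_eq_Icc]
  exact finite_Icc _ _

theorem Int.ncard_setOf_abs_sub_le_le (w : ℝ) {R : ℝ} (hR : 0 ≤ R) :
    ({k : ℤ | |(k : ℝ) - w| ≤ R}.ncard : ℝ) ≤ 2 * R + 1 := by
  rw [Int.setOf_abs_sub_le_eq_Icc, ← Finset.coe_Icc, ncard_coe_finset, Int.card_Icc,
    ← Int.cast_natCast, Int.toNat_eq_max, Int.cast_max]
  have := Int.floor_le (w + R)
  have := Int.le_ceil (w - R)
  push_cast
  exact max_le (by linarith) (by linarith)

theorem Int.ncard_setOf_dvd_sub_abs_sub_le_le {a : ℕ} (ha : a ≠ 0) (r : ℤ) (w : ℝ) {R : ℝ}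
    (hR : 0 ≤ R) :
    ({c : ℤ | (a : ℤ) ∣ c - r ∧ |(c : ℝ) - w| ≤ R}.ncard : ℝ) ≤ 2 * R / a + 1 := by
  have ha' : (0 : ℝ) < a := by positivity
  set K := {k : ℤ | |(k : ℝ) - (w - r) / a| ≤ R / a}
  have hK : K.Finite := Int.finite_setOf_abs_sub_le _ _
  have hsub : {c : ℤ | (a : ℤ) ∣ c - r ∧ |(c : ℝ) - w| ≤ R} ⊆ (fun k => r + a * k) '' K := by
    rintro c ⟨⟨k, hk⟩, hc⟩
    refine ⟨k, ?_, show r + a * k = c by omega⟩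
    have hc' : (c : ℝ) = r + a * k := by exact_mod_cast (by omega : c = r + a * k)
    have hk' : (k : ℝ) - (w - r) / a = (c - w) / a := by rw [hc']; field_simp; ring
    rwa [mem_ofPred_eq, hk', abs_div, abs_of_pos ha', div_le_div_iff_of_pos_right ha']
  calc _ ≤ (((fun k => r + a * k) '' K).ncard : ℝ) := by
        exact_mod_cast ncard_le_ncard hsub (hK.image _)
    _ ≤ (K.ncard : ℝ) := by exact_mod_cast ncard_image_le hK
    _ ≤ 2 * (R / a) + 1 := Int.ncard_setOf_abs_sub_le_le _ (by positivity)
    _ = 2 * R / a + 1 := by ring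

theorem div_add_one_mul_div_add_one_le {R m d : ℝ} (hR : 0 ≤ R) (hm : 1 ≤ m) (hd : 1 ≤ d) :
    (R / d + 1) * (R / m + 1) ≤ (R / (m * d) + 1) * (R + 1) := by
  have hm0 : 0 < m := by linarith
  have hd0 : 0 < d := by linarith
  rw [div_add_one hd0.ne', div_add_one hm0.ne', div_add_one (by positivity), div_mul_div_comm,
    div_mul_eq_mul_div, mul_comm d m, div_le_div_iff_of_pos_right (by positivity)]
  nlinarith [mul_nonneg (mul_nonneg hR (sub_nonneg.2 hm)) (sub_nonneg.2 hd)]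

theorem Set.ncard_le_ncard_mul_of_fibers {α β : Type*} {s : Set α} {t : Set β} {f : α → β}
    {c : ℝ} (hs : s.Finite) (ht : t.Finite) (hf : MapsTo f s t) (hc₀ : 0 ≤ c)
    (hc : ∀ x ∈ s, ({y ∈ s | f y = f x}.ncard : ℝ) ≤ c) :
    (s.ncard : ℝ) ≤ t.ncard * c := by
  classical
  rw [ncard_eq_toFinset_card s hs, ncard_eq_toFinset_card t ht,
    Finset.card_eq_sum_card_fiberwise (f := f) (t := ht.toFinset) (by simpa using hf),
    Nat.cast_sum, ← nsmul_eq_mul]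
  refine Finset.sum_le_card_nsmul _ _ _ fun b _ => ?_
  rcases Finset.eq_empty_or_nonempty {a ∈ hs.toFinset | f a = b} with h | ⟨x, hx⟩
  · simpa [h] using hc₀
  · rw [Finset.mem_filter, Finite.mem_toFinset] at hx
    rw [← hx.2, ← ncard_coe_finset, Finset.coe_filter]
    simp only [Finite.mem_toFinset]
    exact hc x hx.1

theorem finite_setOf_forall_abs_sub_le {ι : Type*} [Finite ι] (z : ι → ℝ) (R : ℝ) :
    {x : ι → ℤ | ∀ i, |(x i : ℝ) - z i| ≤ R}.Finite :=
  (Set.Finite.pi fun i => Int.finite_setOf_abs_sub_le (z i) R).subset fun _ hx i _ => hx i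

def latticePointsInBox {n : ℕ} (Λ : AddSubgroup (Fin n → ℤ)) (z : Fin n → ℝ) (R : ℝ) :
    Set (Fin n → ℤ) :=
  {x | x ∈ Λ ∧ ∀ i, |(x i : ℝ) - z i| ≤ R}

theorem finite_latticePointsInBox {n : ℕ} (Λ : AddSubgroup (Fin n → ℤ)) (z : Fin n → ℝ)
    (R : ℝ) :
    (latticePointsInBox Λ z R).Finite :=
  (finite_setOf_forall_abs_sub_le z R).subset fun _ hx => hx.2

def tailHom (n : ℕ) : (Fin (n + 1) → ℤ) →+ (Fin n → ℤ) :=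
  AddMonoidHom.mk' Fin.tail fun _ _ => rfl

@[simp]
theorem tailHom_apply {n : ℕ} (x : Fin (n + 1) → ℤ) : tailHom n x = Fin.tail x :=
  rfl

theorem tailHom_surjective (n : ℕ) : Function.Surjective (tailHom n) :=
  fun y => ⟨Fin.cons 0 y, rfl⟩

theorem range_single_zero_eq_ker_tailHom (n : ℕ) :
    (AddMonoidHom.single (fun _ : Fin (n + 1) => ℤ) 0).range = (tailHom n).ker := by
  ext x
  refine ⟨?_, fun hx => ⟨x 0, ?_⟩⟩
  · rintro ⟨c, rfl⟩
    funext i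
    simp [Fin.tail]
  · rw [← Fin.cons_self_tail x, show Fin.tail x = 0 from hx]
    funext i
    refine Fin.cases ?_ (fun j => ?_) i <;> simp

section Projection

variable {n : ℕ}

theorem index_eq_index_comap_single_mul_index_map_tailHom (Λ : AddSubgroup (Fin (n + 1) → ℤ)) :
    Λ.index = (Λ.comap (AddMonoidHom.single _ 0)).index * (Λ.map (tailHom n)).index :=
  Λ.index_eq_index_comap_mul_index_map (tailHom_surjective n) (range_single_zero_eq_ker_tailHom n)

theorem natCast_index_comap_single_dvd_sub {Λ : AddSubgroup (Fin (n + 1) → ℤ)}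
    {x y : Fin (n + 1) → ℤ} (hx : x ∈ Λ) (hy : y ∈ Λ) (h : Fin.tail x = Fin.tail y) :
    ((Λ.comap (AddMonoidHom.single _ 0)).index : ℤ) ∣ x 0 - y 0 := by
  have hker : x - y ∈ (tailHom n).ker := by
    rw [AddMonoidHom.mem_ker, map_sub, sub_eq_zero]; exact h
  obtain ⟨c, hc⟩ := (range_single_zero_eq_ker_tailHom n).ge hker
  have hc0 : c = x 0 - y 0 := by simpa using congrFun hc 0
  refine hc0 ▸ Int.natCast_index_dvd_of_mem ?_
  rw [AddSubgroup.mem_comap, hc]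
  exact sub_mem hx hy

theorem ncard_latticePointsInBox_tail_eq_le (Λ : AddSubgroup (Fin (n + 1) → ℤ))
    (z : Fin (n + 1) → ℝ) {R : ℝ} (hR : 0 ≤ R) (hm : (Λ.comap (AddMonoidHom.single _ 0)).index ≠ 0)
    {x₀ : Fin (n + 1) → ℤ} (hx₀ : x₀ ∈ Λ) :
    ({x ∈ latticePointsInBox Λ z R | Fin.tail x = Fin.tail x₀}.ncard : ℝ) ≤
      2 * R / (Λ.comap (AddMonoidHom.single _ 0)).index + 1 := by
  refine le_trans ?_ (Int.ncard_setOf_dvd_sub_abs_sub_le_le hm (x₀ 0) (z 0) hR)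
  refine Nat.cast_le.2 (ncard_le_ncard_of_injOn (· 0) ?_ ?_ ?_)
  · rintro x ⟨⟨hx, hbox⟩, htail⟩
    exact ⟨natCast_index_comap_single_dvd_sub hx hx₀ htail, hbox 0⟩
  · rintro x ⟨-, hx⟩ y ⟨-, hy⟩ (h0 : x 0 = y 0)
    rw [← Fin.cons_self_tail x, ← Fin.cons_self_tail y, h0, hx, hy]
  · exact (Int.finite_setOf_abs_sub_le _ _).subset fun _ hc => hc.2

theorem ncard_latticePointsInBox_le_mul (Λ : AddSubgroup (Fin (n + 1) → ℤ))
    (z : Fin (n + 1) → ℝ) {R : ℝ} (hR : 0 ≤ R)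
    (hm : (Λ.comap (AddMonoidHom.single _ 0)).index ≠ 0) :
    ((latticePointsInBox Λ z R).ncard : ℝ) ≤
      (latticePointsInBox (Λ.map (tailHom n)) (Fin.tail z) R).ncard *
        (2 * R / (Λ.comap (AddMonoidHom.single _ 0)).index + 1) := by
  refine Set.ncard_le_ncard_mul_of_fibers (f := Fin.tail) (finite_latticePointsInBox _ _ _)
    (finite_latticePointsInBox _ _ _) ?_ (by positivity)
    fun x hx => ncard_latticePointsInBox_tail_eq_le Λ z hR hm hx.1
  rintro x ⟨hx, hbox⟩
  exact ⟨Λ.mem_map_of_mem (tailHom n) hx, fun i => hbox i.succ⟩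

theorem ncard_latticePointsInBox_le (Λ : AddSubgroup (Fin (n + 1) → ℤ)) (hΛ : Λ.index ≠ 0)
    (z : Fin (n + 1) → ℝ) {R : ℝ} (hR : 0 ≤ R) :
    ((latticePointsInBox Λ z R).ncard : ℝ) ≤ (2 * R / Λ.index + 1) * (2 * R + 1) ^ n := by
  have hindex := index_eq_index_comap_single_mul_index_map_tailHom Λ
  induction n with
  | zero =>
    have hd : (Λ.map (tailHom 0)).index = 1 :=
      AddSubgroup.index_eq_one.2 (Subsingleton.elim _ _)
    rw [hd, mul_one] at hindex
    calc ((latticePointsInBox Λ z R).ncard : ℝ)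
        ≤ (latticePointsInBox (Λ.map (tailHom 0)) (Fin.tail z) R).ncard *
            (2 * R / Λ.index + 1) :=
          hindex ▸ ncard_latticePointsInBox_le_mul Λ z hR (hindex ▸ hΛ)
      _ ≤ 1 * (2 * R / Λ.index + 1) := by
          gcongr
          exact_mod_cast ncard_le_one_of_subsingleton _
      _ = (2 * R / Λ.index + 1) * (2 * R + 1) ^ 0 := by ring
  | succ n ih =>
    set m := (Λ.comap (AddMonoidHom.single _ 0)).index
    set d := (Λ.map (tailHom (n + 1))).index
    have hm : m ≠ 0 := left_ne_zero_of_mul (hindex ▸ hΛ)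
    have hd : d ≠ 0 := right_ne_zero_of_mul (hindex ▸ hΛ)
    have hm1 : (1 : ℝ) ≤ m := by exact_mod_cast Nat.one_le_iff_ne_zero.2 hm
    have hd1 : (1 : ℝ) ≤ d := by exact_mod_cast Nat.one_le_iff_ne_zero.2 hd
    calc ((latticePointsInBox Λ z R).ncard : ℝ)
        ≤ (latticePointsInBox (Λ.map (tailHom (n + 1))) (Fin.tail z) R).ncard *
            (2 * R / m + 1) := ncard_latticePointsInBox_le_mul Λ z hR hm
      _ ≤ (2 * R / d + 1) * (2 * R + 1) ^ n * (2 * R / m + 1) := by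
          gcongr
          exact ih _ hd _ (index_eq_index_comap_single_mul_index_map_tailHom _)
      _ = (2 * R / d + 1) * (2 * R / m + 1) * (2 * R + 1) ^ n := by ring
      _ ≤ (2 * R / (m * d) + 1) * (2 * R + 1) * (2 * R + 1) ^ n := by
          gcongr ?_ * _
          exact div_add_one_mul_div_add_one_le (by positivity) hm1 hd1
      _ = (2 * R / Λ.index + 1) * (2 * R + 1) ^ (n + 1) := by rw [hindex]; push_cast; ring

end Projection

theorem stmt_10 (N : ℕ) (Λ : Submodule ℤ (Fin N → ℤ)) (b : Module.Basis (Fin N) ℤ Λ)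
    (Δ : ℕ)
    (hΔ : (Δ : ℤ) = |Matrix.det (Matrix.of fun i j => ((b j : Fin N → ℤ) i))|)
    (R : ℝ) (hR : 1 ≤ R) (z : Fin N → ℝ) :
    (({x : Fin N → ℤ | x ∈ Λ ∧ ∀ i, |(x i : ℝ) - z i| ≤ R}).ncard : ℝ) ≤
      (2 * R / Δ + 1) * (2 * R + 1) ^ (N - 1) := by
  have hR₀ : 0 ≤ R := by linarith
  cases N with
  | zero =>
    calc _ ≤ (1 : ℝ) := by exact_mod_cast ncard_le_one_of_subsingleton _
      _ ≤ (2 * R / Δ + 1) * (2 * R + 1) ^ (0 - 1) := by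
          rw [Nat.zero_sub, pow_zero, mul_one, le_add_iff_nonneg_left]
          positivity
  | succ n =>
    have hindex : Λ.toAddSubgroup.index = Δ := by
      rw [AddSubgroup.index_eq_natAbs_det (Pi.basisFun ℤ _) _ b, Pi.basisFun_det_apply,
        ← Matrix.det_transpose]
      exact_mod_cast (Int.natCast_natAbs _).trans hΔ.symm
    rw [Nat.add_sub_cancel, ← hindex]
    exact ncard_latticePointsInBox_le Λ.toAddSubgroup
      (Int.submodule_toAddSubgroup_index_ne_zero_iff.2 ⟨b.equivFun⟩) z hR₀
end

section
/- Let L_1,...,L_M ∈ Z[X_1,...,X_N] be non-zero linear forms, each with relatively prime coefficients, where N ≥ 2. Then there exists x ∈ Z^N with L_i(x) ≠ 0 for every i = 1,...,M and max_j |x_j| ≤ Σ_{i=1}^M 1/H(L_i) + √M. -/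
/-!
Count points of the cube `[-K, K]^N`, with `T = 2K + 1`. A primitive form `q` of height `H`
vanishes at no more than `T^(N-2) (2K/H + 1)` of them: solving for a coordinate where
`|q_p| = H` maps its zeros injectively to points `y` of `[-K, K]^(N-1)` with
`q_p ∣ ∑ q_i y_i`, where the remaining coefficients are coprime to `q_p`. A congruence
`m ∣ c + a * v` has at most `2K gcd(m, a)/|m| + 1` solutions `v ∈ [-K, K]`; adding one
coordinate at a time, `m ∣ c + ∑ a_i y_i` has at most
`T^(n-1) (2K gcd(m, a₁, …, aₙ)/|m| + 1)` solutions in `[-K, K]^n`.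
Summed over the forms, the zeros number at most `T^(N-2) (2K ∑ 1/H_i + M)`, which is less than
`T^N` as soon as `T > ∑ 1/H_i + √M`; so `K = ⌊∑ 1/H_i + √M⌋` leaves a point of the cube
where no form vanishes.
-/

open Finset

namespace LinearFormAvoidance

theorem card_mul_le_of_modEq {S : Finset ℤ} {lo hi d : ℤ} (hd : 0 < d) (hlo : lo ≤ hi)
    (hS : S ⊆ Icc lo hi) (hmod : ∀ u ∈ S, ∀ v ∈ S, u ≡ v [ZMOD d]) :
    (#S : ℤ) * d ≤ hi - lo + d := by
  have hcard : #S ≤ #(Icc 0 ((hi - lo) / d)) := by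
    refine card_le_card_of_injOn (fun v => (v - lo) / d) (fun v hv => ?_) fun u hu v hv huv => ?_
    · have := mem_Icc.mp (hS hv)
      exact mem_Icc.mpr ⟨Int.ediv_nonneg (by omega) hd.le, Int.ediv_le_ediv hd (by omega)⟩
    · have hrem : (u - lo) % d = (v - lo) % d := Int.ModEq.sub_right lo (hmod u hu v hv)
      have hu' := Int.ediv_mul_add_emod (u - lo) d
      have hv' := Int.ediv_mul_add_emod (v - lo) d
      simp only at huv
      rw [huv, hrem] at hu'
      omega
  rw [Int.card_Icc] at hcard
  have hq := Int.ediv_mul_le (hi - lo) hd.ne'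
  have hq0 : 0 ≤ (hi - lo) / d := Int.ediv_nonneg (by omega) hd.le
  have : (#S : ℤ) ≤ (hi - lo) / d + 1 := by omega
  nlinarith

theorem card_filter_dvd_mul_le {lo hi m : ℤ} (hlo : lo ≤ hi) (hm : m ≠ 0) (a c : ℤ) :
    (#{v ∈ Icc lo hi | m ∣ c + a * v} : ℤ) * |m| ≤ (hi - lo) * gcd m a + |m| := by
  obtain ⟨m', a', hcop, hm', ha'⟩ := Int.exists_gcd_one (Int.gcd_pos_of_ne_zero_left a hm)
  have hg : 0 < gcd m a := Int.natCast_pos.mpr (Int.gcd_pos_of_ne_zero_left a hm)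
  rw [Int.coe_gcd] at hm' ha'
  generalize gcd m a = g at *
  subst hm' ha'
  have hcard := card_mul_le_of_modEq (S := {v ∈ Icc lo hi | m' * g ∣ c + a' * g * v})
    (abs_pos.mpr (left_ne_zero_of_mul hm)) hlo (filter_subset _ _) fun u hu v hv => by
      have hdiff : m' * g ∣ a' * (v - u) * g := by
        have := dvd_sub (mem_filter.mp hv).2 (mem_filter.mp hu).2
        rwa [show c + a' * g * v - (c + a' * g * u) = a' * (v - u) * g by ring] at this
      rw [mul_dvd_mul_iff_right hg.ne'] at hdiff
      exact Int.modEq_iff_dvd.mpr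
        ((abs_dvd _ _).mpr (Int.dvd_of_dvd_mul_right_of_gcd_one hdiff hcop))
  rw [abs_mul, abs_of_pos hg, ← mul_assoc]
  nlinarith

theorem gcd_univ_succAbove {α : Type*} [CommMonoidWithZero α] [NormalizedGCDMonoid α]
    {n : ℕ} (a : Fin (n + 1) → α) (p : Fin (n + 1)) :
    univ.gcd a = gcd (a p) (univ.gcd fun i => a (p.succAbove i)) := by
  classical
  rw [Fin.univ_succAbove n p, gcd_cons, map_eq_image, gcd_image]
  rfl

theorem gcd_dvd_of_dvd_add_sum {ι : Type*} {s : Finset ι} {m c : ℤ} {a y : ι → ℤ}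
    (h : m ∣ c + ∑ i ∈ s, a i * y i) : gcd m (s.gcd a) ∣ c := by
  have hsum : gcd m (s.gcd a) ∣ ∑ i ∈ s, a i * y i :=
    dvd_sum fun i hi => ((gcd_dvd_right _ _).trans (Finset.gcd_dvd hi)).mul_right _
  simpa using dvd_sub ((gcd_dvd_left _ _).trans h) hsum

noncomputable def cube (n K : ℕ) : Finset (Fin n → ℤ) :=
  Fintype.piFinset fun _ => Icc (-(K : ℤ)) K

theorem card_cube (n K : ℕ) : #(cube n K) = (2 * K + 1) ^ n := by
  simp only [cube, Fintype.card_piFinset, Int.card_Icc, prod_const, card_univ, Fintype.card_fin]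
  congr 1
  omega

theorem mem_cube {n K : ℕ} {x : Fin n → ℤ} : x ∈ cube n K ↔ ∀ j, |x j| ≤ K := by
  simp [cube, abs_le]

theorem card_filter_cube_succ {n : ℕ} (K : ℕ) (P : (Fin (n + 1) → ℤ) → Prop)
    [DecidablePred P] :
    #{y ∈ cube (n + 1) K | P y} =
      ∑ v ∈ Icc (-(K : ℤ)) K, #{z ∈ cube n K | P (Fin.cons v z)} := by
  have :=
    filter_piFinset_eq_map_consEquiv (fun _ : Fin (n + 1) => Icc (-(K : ℤ)) K) fun _ => True
  simp only [filter_true_of_mem fun _ _ => trivial] at this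
  rw [cube, this, filter_map, card_map, card_filter, sum_product]
  simp only [← card_filter]
  rfl

theorem card_filter_cube_dvd_mul_le {n : ℕ} (K : ℕ) {m : ℤ} (hm : m ≠ 0) (a : Fin n → ℤ)
    (c : ℤ) :
    (#{y ∈ cube n K | m ∣ c + ∑ i, a i * y i} : ℤ) * (2 * K + 1) * |m| ≤
      (2 * K + 1) ^ n * (2 * K * gcd m (univ.gcd a) + |m|) := by
  have hK : (0 : ℤ) ≤ K := Nat.cast_nonneg K
  induction n generalizing c with
  | zero =>
    have hcard : (#{y ∈ cube 0 K | m ∣ c + ∑ i, a i * y i} : ℤ) ≤ 1 := by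
      exact_mod_cast card_le_one_of_subsingleton _
    rw [show univ.gcd a = 0 by simp, gcd_zero_right, ← Int.abs_eq_normalize, pow_zero, one_mul]
    nlinarith [abs_pos.mpr hm, mul_nonneg hK (abs_nonneg m)]
  | succ n ih =>
    set g' := gcd m (univ.gcd fun i : Fin n => a i.succ)
    set g := gcd g' (a 0)
    have hg'_pos : 0 < g' := Int.natCast_pos.mpr (Int.gcd_pos_of_ne_zero_left _ hm)
    have hgcd : gcd m (univ.gcd a) = g := by
      rw [gcd_univ_succAbove a 0, gcd_comm (a 0), ← gcd_assoc]
      simp only [Fin.succAbove_zero]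
      rfl
    have hg_le : g ≤ g' := Int.le_of_dvd hg'_pos (gcd_dvd_left _ _)
    have hg'_le : g' ≤ |m| :=
      Int.le_of_dvd (abs_pos.mpr hm) ((dvd_abs _ _).mpr (gcd_dvd_left _ _))
    rw [card_filter_cube_succ, hgcd]
    simp only [Fin.sum_univ_succ, Fin.cons_zero, Fin.cons_succ, ← add_assoc]
    set good := {v ∈ Icc (-(K : ℤ)) K | g' ∣ c + a 0 * v}
    have hsolvable : ∀ v ∈ Icc (-(K : ℤ)) K,
        #{z ∈ cube n K | m ∣ c + a 0 * v + ∑ i : Fin n, a i.succ * z i} ≠ 0 →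
          g' ∣ c + a 0 * v :=
      fun v _ hv => by
        obtain ⟨z, hz⟩ := card_ne_zero.mp hv
        exact gcd_dvd_of_dvd_add_sum (mem_filter.mp hz).2
    rw [← sum_filter_of_ne hsolvable]
    have hgood : (#good : ℤ) * g' ≤ 2 * K * g + g' := by
      have := card_filter_dvd_mul_le (neg_le_self hK) hg'_pos.ne' (a 0) c
      rwa [abs_of_pos hg'_pos, sub_neg_eq_add, ← two_mul] at this
    -- `(2K+1)(2Kg+|m|)g' - (2Kg+g')(2Kg'+|m|) = 2K(g'-g)(|m|-g')`
    have hstep : (#good : ℤ) * (2 * K * g' + |m|) ≤ (2 * K + 1) * (2 * K * g + |m|) := by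
      refine le_of_mul_le_mul_right ?_ hg'_pos
      nlinarith [mul_le_mul_of_nonneg_right hgood (by positivity : 0 ≤ 2 * K * g' + |m|),
        mul_nonneg (mul_nonneg hK (sub_nonneg.mpr hg_le)) (sub_nonneg.mpr hg'_le)]
    calc _ = ∑ v ∈ good,
          (#{z ∈ cube n K | m ∣ c + a 0 * v + ∑ i : Fin n, a i.succ * z i} : ℤ) *
            (2 * K + 1) * |m| := by
          push_cast [sum_mul]; rfl
      _ ≤ #good * ((2 * K + 1) ^ n * (2 * K * g' + |m|)) := by
          simpa using sum_le_card_nsmul _ _ _ fun v _ => ih _ (c + a 0 * v)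
      _ ≤ (2 * K + 1) ^ (n + 1) * (2 * K * g + |m|) := by
          rw [pow_succ]; nlinarith [pow_pos (by positivity : (0 : ℤ) < 2 * K + 1) n]

theorem card_zeros_le_card_dvd {n : ℕ} (K : ℕ) (q : Fin (n + 1) → ℤ) {p : Fin (n + 1)}
    (hp : q p ≠ 0) :
    #{x ∈ cube (n + 1) K | ∑ j, q j * x j = 0} ≤
      #{y ∈ cube n K | q p ∣ 0 + ∑ i, q (p.succAbove i) * y i} := by
  refine card_le_card_of_injOn p.removeNth (fun x hx => ?_) fun x hx x' hx' hxx' => ?_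
  · obtain ⟨hx, hx0⟩ := mem_filter.mp hx
    rw [Fin.sum_univ_succAbove _ p] at hx0
    refine mem_filter.mpr ⟨((Fin.mem_piFinset_iff_pivot_removeNth p).mp hx).2, ?_⟩
    change q p ∣ 0 + ∑ i, q (p.succAbove i) * x (p.succAbove i)
    rw [zero_add, eq_neg_of_add_eq_zero_right hx0]
    exact (dvd_mul_right _ _).neg_right
  · obtain ⟨-, hx0⟩ := mem_filter.mp hx
    obtain ⟨-, hx0'⟩ := mem_filter.mp hx'
    rw [Fin.sum_univ_succAbove _ p] at hx0 hx0'
    have hrest : ∀ i, x (p.succAbove i) = x' (p.succAbove i) := congrFun hxx'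
    simp only [hrest] at hx0
    have hpivot : x p = x' p := mul_left_cancel₀ hp (by linarith)
    rw [← Fin.insertNth_self_removeNth p x, ← Fin.insertNth_self_removeNth p x', hpivot]
    exact congrArg _ hxx'

def height {ι : Type*} [Fintype ι] (q : ι → ℤ) : ℕ :=
  univ.sup fun j => (q j).natAbs

theorem card_zeros_mul_le {n : ℕ} (K : ℕ) (q : Fin (n + 1) → ℤ) (hq : univ.gcd q = 1) :
    (#{x ∈ cube (n + 1) K | ∑ j, q j * x j = 0} : ℝ) * (2 * K + 1) ≤
      (2 * K + 1) ^ n * (2 * K / height q + 1) := by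
  obtain ⟨p, -, hpH⟩ := exists_mem_eq_sup univ univ_nonempty fun j => (q j).natAbs
  have hp : q p ≠ 0 := by
    intro hp0
    refine one_ne_zero (hq ▸ gcd_eq_zero_iff.mpr fun j _ => ?_)
    have := le_sup (f := fun j => (q j).natAbs) (mem_univ j)
    simp only [hpH, hp0] at this
    omega
  have hcop : gcd (q p) (univ.gcd fun i => q (p.succAbove i)) = 1 := by
    rw [← gcd_univ_succAbove, hq]
  have hcount := card_filter_cube_dvd_mul_le K hp (fun i => q (p.succAbove i)) 0
  rw [hcop, mul_one] at hcount
  have hzeros : (#{x ∈ cube (n + 1) K | ∑ j, q j * x j = 0} : ℤ) * (2 * K + 1) * |q p| ≤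
      (2 * K + 1) ^ n * (2 * K + |q p|) := by
    refine le_trans ?_ hcount
    gcongr
    exact_mod_cast card_zeros_le_card_dvd K q hp
  have hH : (height q : ℝ) = |(q p : ℝ)| := by
    rw [height, hpH, Nat.cast_natAbs, Int.cast_abs]
  have hHpos : (0 : ℝ) < height q := by rw [hH]; positivity
  rw [← mul_le_mul_iff_of_pos_right hHpos]
  calc _ ≤ (2 * K + 1 : ℝ) ^ n * (2 * K + height q) := by
        rw [hH]; exact_mod_cast hzeros
    _ = _ := by field_simp

theorem exists_forall_not_of_sum_card_filter_lt {α ι : Type*} [Fintype ι] (s : Finset α)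
    (P : ι → α → Prop) [∀ i, DecidablePred (P i)] (h : ∑ i, #{x ∈ s | P i x} < #s) :
    ∃ x ∈ s, ∀ i, ¬ P i x := by
  classical
  by_contra! hcover
  have hsub : s ⊆ univ.biUnion fun i => {x ∈ s | P i x} := fun x hx => by
    obtain ⟨i, hi⟩ := hcover x hx
    exact mem_biUnion.mpr ⟨i, mem_univ i, mem_filter.mpr ⟨hx, hi⟩⟩
  exact (card_le_card hsub |>.trans card_biUnion_le).not_gt h

theorem mul_add_lt_sq_of_add_sqrt_lt {S M T : ℝ} (hS : 0 ≤ S) (hM : 0 ≤ M)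
    (h : S + √M < T) :
    T * S + M < T ^ 2 := by
  have hsqrt : √M * √M = M := Real.mul_self_sqrt hM
  nlinarith [Real.sqrt_nonneg M]

end LinearFormAvoidance

open LinearFormAvoidance in
theorem stmt_15_general (N M : ℕ) (hN : 2 ≤ N) (L : Fin M → Fin N → ℤ)
    (hgcd : ∀ i, Finset.univ.gcd (L i) = 1) :
    ∃ x : Fin N → ℤ, (∀ i, ∑ j, L i j * x j ≠ 0) ∧
      ∀ j, (|x j| : ℝ) ≤
        (∑ i, 1 / ((Finset.univ.sup fun j => (L i j).natAbs : ℕ) : ℝ)) +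
          Real.sqrt M := by
  obtain ⟨n, rfl⟩ : ∃ n, N = n + 1 := ⟨N - 1, by omega⟩
  set S := ∑ i, 1 / (height (L i) : ℝ)
  set K := ⌊S + √M⌋₊
  have hS : 0 ≤ S := sum_nonneg fun i _ => by positivity
  have hT : S + √M < 2 * K + 1 := by
    linarith [Nat.lt_floor_add_one (S + √M), (Nat.cast_nonneg K : (0 : ℝ) ≤ K)]
  have hcount : ∑ i, #{x ∈ cube (n + 1) K | ∑ j, L i j * x j = 0} < #(cube (n + 1) K) := by
    rw [card_cube]
    suffices (∑ i, #{x ∈ cube (n + 1) K | ∑ j, L i j * x j = 0} : ℝ) * (2 * K + 1) <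
        (2 * K + 1) ^ (n + 1) * (2 * K + 1) by
      exact_mod_cast lt_of_mul_lt_mul_right this (by positivity)
    calc _ ≤ ∑ i, (2 * K + 1 : ℝ) ^ n * (2 * K / height (L i) + 1) := by
          push_cast [sum_mul]; exact sum_le_sum fun i _ => card_zeros_mul_le K (L i) (hgcd i)
      _ = (2 * K + 1 : ℝ) ^ n * (2 * K * S + M) := by
          rw [← mul_sum, sum_add_distrib, mul_sum]
          simp [div_eq_mul_inv]
      _ < (2 * K + 1 : ℝ) ^ n * (2 * K + 1) ^ 2 := by
          gcongr
          linarith [mul_add_lt_sq_of_add_sqrt_lt hS (Nat.cast_nonneg M) hT]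
      _ = _ := by ring
  obtain ⟨x, hx, hx0⟩ := exists_forall_not_of_sum_card_filter_lt _ _ hcount
  refine ⟨x, hx0, fun j => ?_⟩
  calc (|x j| : ℝ) ≤ K := by exact_mod_cast mem_cube.mp hx j
    _ ≤ S + √M := Nat.floor_le (by positivity)

theorem stmt_15 (N M : ℕ) (hN : 2 ≤ N) (L : Fin M → Fin N → ℤ)
    (hL : ∀ i, L i ≠ 0) (hgcd : ∀ i, Finset.univ.gcd (L i) = 1) :
    ∃ x : Fin N → ℤ, (∀ i, ∑ j, L i j * x j ≠ 0) ∧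
      ∀ j, (|x j| : ℝ) ≤
        (∑ i, 1 / ((Finset.univ.sup fun j => (L i j).natAbs : ℕ) : ℝ)) +
          Real.sqrt M :=
  stmt_15_general N M hN L hgcd
end

section
/- Let Ω ⊆ Z^N be a sublattice of rank J ≥ 1, and let U_0 be a real subspace of R^N that does not contain Ω. Then there exists x ∈ Ω \ U_0 with max_i |x_i| ≤ (2 J^J (3/2)^{J−1} + J) H(Ω). -/
/-- The height `H(Λ)` of a sublattice of `ℤ^N`: the maximum of the absolute
values of the Grassmann coordinates (maximal minors of a basis matrix). -/
noncomputable def latticeHeight {N : ℕ} (Λ : Submodule ℤ (Fin N → ℤ)) : ℕ :=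
  letI := Classical.decEq (Module.Free.ChooseBasisIndex ℤ Λ)
  let b := Module.Free.chooseBasis ℤ Λ
  Finset.univ.sup fun f : Module.Free.ChooseBasisIndex ℤ Λ → Fin N =>
    (Matrix.det (Matrix.of fun i j => ((b j : Fin N → ℤ) (f i)))).natAbs

/-!
Let `v₁, …, v_J` be a basis of `Ω` and choose `J` coordinates `f` on which the minor `D` of the
basis matrix has maximal absolute value `H = |D| ≠ 0`. By Cramer's rule every coordinate of a
lattice vector `ω` is a combination of its `f`-coordinates with coefficients (minors)/`D`, so
`|ω_k| ≤ ∑ᵢ |ω_{f i}|`. The adjugate provides lattice vectors `wᵢ` whose `f`-coordinates are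
`D • eᵢ`. If some `wᵢ ∉ U₀` it is the required vector; otherwise reducing `x₀ ∈ Ω \ U₀` modulo
the `wᵢ` keeps it outside `U₀` and puts its `f`-coordinates in `[0, H)`. Either way all
coordinates are at most `J H`.
-/

open Matrix Finset Module

section MaximalMinor

variable {ι κ R : Type*} [Fintype ι] [DecidableEq ι]

def maximalMinor [CommRing R] (v : ι → κ → R) (f : ι → κ) : R :=
  (of fun i j => v j (f i)).det

theorem exists_maximalMinor_ne_zero_of_field {K : Type*} [Field K] [Fintype κ]
    {v : ι → κ → K} (hv : LinearIndependent K v) : ∃ f : ι → κ, maximalMinor v f ≠ 0 := by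
  set A : Matrix ι κ K := of v
  have hrank : finrank K (Submodule.span K (Set.range Aᵀ.row)) = Fintype.card ι := by
    rw [← rank_eq_finrank_span_row, rank_transpose]
    exact hv.rank_matrix
  obtain ⟨κ', a, ha, hspan, hli⟩ := exists_linearIndependent' K Aᵀ.row
  have : Fintype κ' := Fintype.ofInjective a ha
  rw [← hspan, finrank_span_eq_card hli] at hrank
  let e : ι ≃ κ' := (Fintype.equivOfCardEq hrank).symm
  refine ⟨a ∘ e, fun h => ?_⟩
  have hrows : LinearIndependent K (of fun i j => v j ((a ∘ e) i)).row := hli.comp e e.injective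
  exact (isUnit_iff_isUnit_det _).mp (linearIndependent_rows_iff_isUnit.mp hrows) |>.ne_zero h

theorem exists_maximalMinor_ne_zero [CommRing R] [IsDomain R] [Fintype κ]
    {v : ι → κ → R} (hv : LinearIndependent R v) : ∃ f : ι → κ, maximalMinor v f ≠ 0 := by
  let K := FractionRing R
  let φ : (κ → R) →ₗ[R] (κ → K) := (Algebra.linearMap R K).compLeft κ
  have hφ : Function.Injective φ := fun x y h => funext fun k =>
    IsFractionRing.injective R K (congrFun h k)
  have hvK : LinearIndependent K (φ ∘ v) :=
    (LinearIndependent.iff_fractionRing R K).mp (hv.map' φ (LinearMap.ker_eq_bot.mpr hφ))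
  obtain ⟨f, hf⟩ := exists_maximalMinor_ne_zero_of_field hvK
  refine ⟨f, fun h => hf ?_⟩
  have hmap : maximalMinor (φ ∘ v) f = algebraMap R K (maximalMinor v f) := by
    rw [maximalMinor, maximalMinor, RingHom.map_det]
    rfl
  rw [hmap, h, map_zero]

variable [CommRing R]

theorem maximalMinor_update_eq_cramer (v : ι → κ → R) (f : ι → κ) (i : ι) (k : κ) :
    maximalMinor v (Function.update f i k) =
      cramer (of fun i j => v j (f i))ᵀ (fun j => v j k) i := by
  rw [cramer_apply, updateCol_transpose, det_transpose, maximalMinor]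
  congr 1
  ext i' j
  by_cases h : i' = i
  · subst h
    simp
  · simp [h]

theorem sum_mul_maximalMinor_update (v : ι → κ → R) (f : ι → κ) (k : κ) (j : ι) :
    ∑ i, v j (f i) * maximalMinor v (Function.update f i k) = maximalMinor v f * v j k := by
  simp_rw [maximalMinor_update_eq_cramer]
  have := congrFun (mulVec_cramer (of fun i j => v j (f i))ᵀ (fun j => v j k)) j
  rwa [det_transpose] at this

theorem maximalMinor_mul_apply_of_mem_span (v : ι → κ → R) (f : ι → κ) (k : κ) {ω : κ → R}
    (hω : ω ∈ Submodule.span R (Set.range v)) :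
    maximalMinor v f * ω k = ∑ i, ω (f i) * maximalMinor v (Function.update f i k) := by
  obtain ⟨c, rfl⟩ := Submodule.mem_span_range_iff_exists_fun R |>.mp hω
  simp only [Finset.sum_apply, Pi.smul_apply, smul_eq_mul, Finset.sum_mul, Finset.mul_sum]
  rw [Finset.sum_comm]
  refine Finset.sum_congr rfl fun j _ => ?_
  simp_rw [mul_assoc, ← Finset.mul_sum, sum_mul_maximalMinor_update]
  ring

theorem exists_mem_span_apply_eq_single (v : ι → κ → R) (f : ι → κ) (i : ι) :
    ∃ w ∈ Submodule.span R (Set.range v),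
      ∀ i', w (f i') = (Pi.single i (maximalMinor v f) : ι → R) i' := by
  refine ⟨∑ j, adjugate (of fun i j => v j (f i)) j i • v j,
    Submodule.sum_mem _ fun j _ => Submodule.smul_mem _ _ (Submodule.subset_span ⟨j, rfl⟩),
    fun i' => ?_⟩
  have := congrFun (congrFun (mul_adjugate (of fun i j => v j (f i))) i') i
  simp only [mul_apply, of_apply, Matrix.smul_apply, one_apply, smul_eq_mul] at this
  simp only [Finset.sum_apply, Pi.smul_apply, smul_eq_mul, Pi.single_apply, maximalMinor]
  rw [Finset.sum_congr rfl fun j _ => mul_comm _ _, this, mul_ite, mul_one, mul_zero]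

end MaximalMinor

theorem abs_apply_le_sum_abs_apply {R ι κ : Type*} [CommRing R] [LinearOrder R]
    [IsStrictOrderedRing R] [Fintype ι] [DecidableEq ι] {v : ι → κ → R} {f : ι → κ}
    (hf : maximalMinor v f ≠ 0) (hmax : ∀ g, |maximalMinor v g| ≤ |maximalMinor v f|)
    {ω : κ → R} (hω : ω ∈ Submodule.span R (Set.range v)) (k : κ) :
    |ω k| ≤ ∑ i, |ω (f i)| := by
  have key : |maximalMinor v f| * |ω k| ≤ |maximalMinor v f| * ∑ i, |ω (f i)| := by
    rw [← abs_mul, maximalMinor_mul_apply_of_mem_span v f k hω, Finset.mul_sum]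
    refine (Finset.abs_sum_le_sum_abs _ _).trans (Finset.sum_le_sum fun i _ => ?_)
    rw [abs_mul, mul_comm]
    exact mul_le_mul_of_nonneg_right (hmax _) (abs_nonneg _)
  exact le_of_mul_le_mul_left key (abs_pos.mpr hf)

theorem exists_sub_sum_smul_apply_eq_emod {ι κ : Type*} [Fintype ι] [DecidableEq ι]
    (w : ι → κ → ℤ) (f : ι → κ) (D : ℤ) (hw : ∀ i i', w i (f i') = (Pi.single i D : ι → ℤ) i')
    (x : κ → ℤ) : ∃ q : ι → ℤ, ∀ i, (x - ∑ j, q j • w j) (f i) = x (f i) % D := by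
  refine ⟨fun j => x (f j) / D, fun i => ?_⟩
  simp only [Pi.sub_apply, Finset.sum_apply, Pi.smul_apply, smul_eq_mul, hw, Pi.single_apply]
  simp [Int.emod_def, mul_comm]

theorem exists_mem_span_notMem_abs_le {ι κ : Type*} [Fintype ι] [DecidableEq ι]
    {v : ι → κ → ℤ} {f : ι → κ} (hf : maximalMinor v f ≠ 0)
    (hmax : ∀ g, |maximalMinor v g| ≤ |maximalMinor v f|) (L : AddSubgroup (κ → ℤ))
    {x₀ : κ → ℤ} (hx₀ : x₀ ∈ Submodule.span ℤ (Set.range v)) (hx₀L : x₀ ∉ L) :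
    ∃ x ∈ Submodule.span ℤ (Set.range v), x ∉ L ∧
      ∀ k, |x k| ≤ Fintype.card ι * |maximalMinor v f| := by
  set D := maximalMinor v f
  have bound : ∀ x ∈ Submodule.span ℤ (Set.range v), (∀ i, |x (f i)| ≤ |D|) →
      ∀ k, |x k| ≤ Fintype.card ι * |D| := fun x hx hxf k =>
    (abs_apply_le_sum_abs_apply hf hmax hx k).trans <| by
      simpa using Finset.sum_le_card_nsmul univ _ _ fun i _ => hxf i
  choose w hw hwf using exists_mem_span_apply_eq_single v f
  by_cases hwL : ∀ i, w i ∈ L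
  · obtain ⟨q, hq⟩ := exists_sub_sum_smul_apply_eq_emod w f D hwf x₀
    have hsum : ∑ j, q j • w j ∈ Submodule.span ℤ (Set.range v) :=
      Submodule.sum_mem _ fun j _ => Submodule.smul_mem _ _ (hw j)
    have hsumL : ∑ j, q j • w j ∈ L := sum_mem fun j _ => zsmul_mem (hwL j) _
    refine ⟨x₀ - ∑ j, q j • w j, sub_mem hx₀ hsum, fun h => hx₀L ?_,
      bound _ (sub_mem hx₀ hsum) fun i => ?_⟩
    · simpa using add_mem h hsumL
    · rw [hq, abs_of_nonneg (Int.emod_nonneg _ hf)]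
      exact (Int.emod_lt_abs _ hf).le
  · push Not at hwL
    obtain ⟨i, hi⟩ := hwL
    refine ⟨w i, hw i, hi, bound _ (hw i) fun i' => ?_⟩
    rw [hwf, Pi.single_apply]
    split_ifs
    exacts [le_rfl, by simp]

theorem exists_mem_notMem_abs_le_finrank_mul_latticeHeight {N : ℕ}
    (Ω : Submodule ℤ (Fin N → ℤ)) (L : AddSubgroup (Fin N → ℤ)) {x₀ : Fin N → ℤ}
    (hx₀ : x₀ ∈ Ω) (hx₀L : x₀ ∉ L) :
    ∃ x ∈ Ω, x ∉ L ∧ ∀ k, |x k| ≤ finrank ℤ Ω * (latticeHeight Ω : ℤ) := by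
  let := Classical.decEq (Free.ChooseBasisIndex ℤ Ω)
  set b := Free.chooseBasis ℤ Ω
  set v : Free.ChooseBasisIndex ℤ Ω → Fin N → ℤ := fun j => b j
  have hspan : Submodule.span ℤ (Set.range v) = Ω := by
    rw [show Set.range v = Ω.subtype '' Set.range b from Set.range_comp _ _,
      Submodule.span_image, b.span_eq, Submodule.map_top, Submodule.range_subtype]
  have hv : LinearIndependent ℤ v := b.linearIndependent.map' Ω.subtype Ω.ker_subtype
  obtain ⟨f₁, hf₁⟩ := exists_maximalMinor_ne_zero hv
  obtain ⟨f, -, hf⟩ :=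
    Finset.exists_mem_eq_sup univ ⟨f₁, mem_univ _⟩ fun f => (maximalMinor v f).natAbs
  have hH : (latticeHeight Ω : ℤ) = |maximalMinor v f| := by
    rw [Int.abs_eq_natAbs, ← hf]
    rfl
  have hmax : ∀ g, |maximalMinor v g| ≤ |maximalMinor v f| := fun g => by
    rw [← hH, Int.abs_eq_natAbs, Nat.cast_le]
    exact Finset.le_sup (f := fun f => (maximalMinor v f).natAbs) (mem_univ g)
  have hf0 : maximalMinor v f ≠ 0 := fun h => hf₁ (by simpa [h] using hmax f₁)
  obtain ⟨x, hx, hxL, hxk⟩ := exists_mem_span_notMem_abs_le hf0 hmax L (hspan.symm ▸ hx₀) hx₀L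
  rw [← finrank_eq_card_chooseBasisIndex, ← hH] at hxk
  exact ⟨x, hspan ▸ hx, hxL, hxk⟩

theorem stmt_17_general (N J : ℕ) (Ω : Submodule ℤ (Fin N → ℤ))
    (hΩrk : Module.finrank ℤ Ω = J)
    (U₀ : Submodule ℝ (Fin N → ℝ))
    (hU : ¬ ∀ x ∈ Ω, (fun i => ((x i : ℤ) : ℝ)) ∈ U₀) :
    ∃ x ∈ Ω, (fun i => ((x i : ℤ) : ℝ)) ∉ U₀ ∧
      ∀ k, (|x k| : ℝ) ≤
        (2 * (J : ℝ) ^ J * (3 / 2) ^ (J - 1) + J) * (latticeHeight Ω : ℝ) := by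
  push Not at hU
  obtain ⟨x₀, hx₀, hx₀U⟩ := hU
  obtain ⟨x, hx, hxU, hxk⟩ := exists_mem_notMem_abs_le_finrank_mul_latticeHeight Ω
    (U₀.toAddSubgroup.comap ((Int.castAddHom ℝ).compLeft (Fin N))) hx₀ hx₀U
  refine ⟨x, hx, hxU, fun k => ?_⟩
  have hJH : (|x k| : ℝ) ≤ J * latticeHeight Ω := by
    rw [← hΩrk]
    exact_mod_cast hxk k
  refine hJH.trans ?_
  rw [add_mul]
  exact le_add_of_nonneg_left (by positivity)

theorem stmt_17 (N J : ℕ) (hJ : 1 ≤ J) (Ω : Submodule ℤ (Fin N → ℤ))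
    (hΩrk : Module.finrank ℤ Ω = J)
    (U₀ : Submodule ℝ (Fin N → ℝ))
    (hU : ¬ ∀ x ∈ Ω, (fun i => ((x i : ℤ) : ℝ)) ∈ U₀) :
    ∃ x ∈ Ω, (fun i => ((x i : ℤ) : ℝ)) ∉ U₀ ∧
      ∀ k, (|x k| : ℝ) ≤
        (2 * (J : ℝ) ^ J * (3 / 2) ^ (J - 1) + J) * (latticeHeight Ω : ℝ) :=
  stmt_17_general N J Ω hΩrk U₀ hU
end

section
/- Let R be a positive integer and let Λ_1,...,Λ_M be sublattices of Z^N of rank N−1 each such that every integer point x with max_i |x_i| ≤ R lies in some Λ_j. Then Σ_{i=1}^M 1/H(Λ_i) ≥ R − √M. -/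
/-!
Choose a basis of `Λ` and coordinates `f` on which its maximal minor is `± H(Λ) ≠ 0`.
Restriction to these `N - 1` coordinates is injective on `Λ` and maps it onto a sublattice of
`ℤ^(N-1)` of index `H(Λ)`, so `Λ` has at most as many points in the box `[-R, R]^N` as that
sublattice has in `[-R, R]^(N-1)`.

A coset of a lattice `Γ ⊆ ℤ^(m+1)` of index `D` meets `[-R, R]^(m+1)` in at most
`(2R+1)^m (2R/D + 1)` points: its last coordinates lie in a coset of `gℤ`, the image of `Γ`
under the last coordinate, so they take at most `2R/g + 1` values, and each fibre is a coset of
the slice `Γ' = Γ ∩ (ℤ^m × 0)`, whose index is `D/g`. Induction on `m` and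
`(2R/a + 1)(2R/b + 1) ≤ (2R+1)(2R/(ab) + 1)` give the bound.

As the `Λ_i` cover the `(2R+1)^N` points of the box, `(2R+1)^2 ≤ 2R ∑ 1/H(Λ_i) + M`, which
forces `∑ 1/H(Λ_i) ≥ R - √M`.
-/

open Finset Matrix
open scoped Classical

noncomputable def intBox (m R : ℕ) : Finset (Fin m → ℤ) :=
  Fintype.piFinset fun _ => Icc (-(R : ℤ)) R

theorem mem_intBox {m R : ℕ} {v : Fin m → ℤ} : v ∈ intBox m R ↔ ∀ k, |v k| ≤ R := by
  simp [intBox, abs_le]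

theorem card_intBox (m R : ℕ) : #(intBox m R) = (2 * R + 1) ^ m := by
  have : ((R : ℤ) + 1 + R).toNat = 2 * R + 1 := by omega
  simp [intBox, Fintype.card_piFinset, this]

theorem Int.card_le_div_add_one_of_dvd_sub {S : Finset ℤ} {g L : ℕ} (hg : 0 < g)
    (hdiam : ∀ s ∈ S, ∀ t ∈ S, t - s ≤ L)
    (hdvd : ∀ s ∈ S, ∀ t ∈ S, (g : ℤ) ∣ t - s) :
    #S ≤ L / g + 1 := by
  rcases S.eq_empty_or_nonempty with rfl | hS
  · simp
  set a := S.min' hS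
  have hsub : S ⊆ (Finset.range (L / g + 1)).image fun k : ℕ => a + g * k := by
    intro t ht
    obtain ⟨k, hk⟩ := hdvd a (S.min'_mem hS) t ht
    have hL := hdiam a (S.min'_mem hS) t ht
    have hk0 : 0 ≤ k := by
      by_contra! h
      nlinarith [S.min'_le t ht]
    lift k to ℕ using hk0
    have hkL : k * g ≤ L := by
      rw [mul_comm]
      exact_mod_cast hk ▸ hL
    have hk' : k < L / g + 1 := Nat.lt_succ_of_le ((Nat.le_div_iff_mul_le hg).mpr hkL)
    exact mem_image.mpr ⟨k, mem_range.mpr hk', by linarith⟩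
  exact (card_le_card hsub).trans (card_image_le.trans (card_range _).le)

theorem Int.natCast_index_dvd_of_mem_s18 {H : AddSubgroup ℤ} {t : ℤ} (ht : t ∈ H) :
    (H.index : ℤ) ∣ t := by
  obtain ⟨a, rfl⟩ := Int.subgroup_cyclic H
  rw [← AddSubgroup.zmultiples_eq_closure, Int.mem_zmultiples_iff] at ht
  rwa [← AddSubgroup.zmultiples_eq_closure, Int.index_zmultiples, Int.natAbs_dvd]

theorem card_Icc_filter_sub_mem_le (R : ℕ) {H : AddSubgroup ℤ} (hH : H.index ≠ 0) (r : ℤ) :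
    (#{t ∈ Icc (-(R : ℤ)) R | t - r ∈ H} : ℝ) ≤ 2 * R / H.index + 1 := by
  have hcard : #{t ∈ Icc (-(R : ℤ)) R | t - r ∈ H} ≤ 2 * R / H.index + 1 := by
    refine Int.card_le_div_add_one_of_dvd_sub (Nat.pos_of_ne_zero hH) ?_ ?_
    · intro s hs t ht
      simp only [mem_filter, mem_Icc] at hs ht
      push_cast
      omega
    · intro s hs t ht
      simpa using Int.natCast_index_dvd_of_mem_s18 (H.sub_mem (mem_filter.mp ht).2 (mem_filter.mp hs).2)
  calc (#{t ∈ Icc (-(R : ℤ)) R | t - r ∈ H} : ℝ)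
        ≤ ((2 * R / H.index : ℕ) : ℝ) + 1 := by exact_mod_cast hcard
    _ ≤ 2 * R / H.index + 1 := by
        gcongr
        exact_mod_cast Nat.cast_div_le

theorem AddSubgroup.index_eq_index_comap_mul_index_map_s18 {A B C : Type*} [AddCommGroup A]
    [AddCommGroup B] [AddCommGroup C] {f : A →+ B} {g : B →+ C} (hg : Function.Surjective g)
    (hfg : f.range = g.ker) (H : AddSubgroup B) :
    H.index = (H.comap f).index * (H.map g).index := by
  rw [← relIndex_top_right (H.comap f), relIndex_comap, ← AddMonoidHom.range_eq_map, hfg,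
    index_map, g.range_eq_top_of_surjective hg, index_top, mul_one, ← relIndex_sup_left,
    relIndex_mul_index le_sup_left]

theorem div_add_one_mul_div_add_one_le_s18 {r a b : ℝ} (hr : 0 ≤ r) (ha : 1 ≤ a) (hb : 1 ≤ b) :
    (r / a + 1) * (r / b + 1) ≤ (r + 1) * (r / (a * b) + 1) := by
  have key : 0 ≤ r * (a - 1) * (b - 1) := by
    have := sub_nonneg.2 ha
    have := sub_nonneg.2 hb
    positivity
  rw [div_add_one, div_add_one, div_add_one, div_mul_div_comm, mul_div_assoc',
    div_le_div_iff_of_pos_right] <;> first | positivity | nlinarith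

def snocZeroHom (m : ℕ) (A : Type*) [AddCommGroup A] :
    (Fin m → A) →+ (Fin (m + 1) → A) where
  toFun y := Fin.snoc y 0
  map_zero' := by ext i; refine Fin.lastCases ?_ (fun i => ?_) i <;> simp
  map_add' y z := by ext i; refine Fin.lastCases ?_ (fun i => ?_) i <;> simp

theorem range_snocZeroHom (m : ℕ) (A : Type*) [AddCommGroup A] :
    (snocZeroHom m A).range = (Pi.evalAddMonoidHom (fun _ => A) (Fin.last m)).ker := by
  ext v
  constructor
  · rintro ⟨y, rfl⟩
    simp [snocZeroHom]
  · intro hv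
    refine ⟨Fin.init v, ?_⟩
    rw [AddMonoidHom.mem_ker, Pi.evalAddMonoidHom_apply] at hv
    conv_rhs => rw [← Fin.snoc_init_self v, hv]
    rfl

theorem card_intBox_fiber_le {m R : ℕ} (Γ : AddSubgroup (Fin (m + 1) → ℤ))
    (x v₀ : Fin (m + 1) → ℤ) (hv₀ : v₀ - x ∈ Γ) :
    #{v ∈ {v ∈ intBox (m + 1) R | v - x ∈ Γ} | v (Fin.last m) = v₀ (Fin.last m)} ≤
      #{y ∈ intBox m R | y - Fin.init v₀ ∈ Γ.comap (snocZeroHom m ℤ)} := by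
  refine card_le_card_of_injOn Fin.init (fun v hv => ?_) (fun v hv w hw hvw => ?_)
  · simp only [mem_coe, mem_filter, mem_intBox] at hv
    obtain ⟨⟨hbox, hΓ⟩, hlast⟩ := hv
    simp only [mem_coe, mem_filter, mem_intBox, AddSubgroup.mem_comap]
    refine ⟨fun k => hbox _, ?_⟩
    convert Γ.sub_mem hΓ hv₀ using 1
    ext i
    refine Fin.lastCases ?_ (fun i => ?_) i <;> simp [snocZeroHom, hlast, Fin.init]
  · simp only [mem_coe, mem_filter] at hv hw
    rw [← Fin.snoc_init_self v, ← Fin.snoc_init_self w, hvw, hv.2, hw.2]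

theorem card_intBox_filter_sub_mem_le_card_mul {m R : ℕ} (Γ : AddSubgroup (Fin (m + 1) → ℤ))
    (x : Fin (m + 1) → ℤ) {B : ℝ} (hB : 0 ≤ B)
    (hslice : ∀ y₀, (2 * R + 1 : ℝ) *
      #{y ∈ intBox m R | y - y₀ ∈ Γ.comap (snocZeroHom m ℤ)} ≤ B) :
    (2 * R + 1 : ℝ) * #{v ∈ intBox (m + 1) R | v - x ∈ Γ} ≤
      #{t ∈ Icc (-(R : ℤ)) R |
        t - x (Fin.last m) ∈ Γ.map (Pi.evalAddMonoidHom _ (Fin.last m))} * B := by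
  set T := {v ∈ intBox (m + 1) R | v - x ∈ Γ}
  set C := {t ∈ Icc (-(R : ℤ)) R |
    t - x (Fin.last m) ∈ Γ.map (Pi.evalAddMonoidHom (fun _ => ℤ) (Fin.last m))}
  have hmaps : (T : Set (Fin (m + 1) → ℤ)).MapsTo (fun v => v (Fin.last m)) (C : Set ℤ) := by
    intro v hv
    simp only [T, mem_coe, mem_filter, mem_intBox] at hv
    simp only [C, mem_coe, mem_filter, mem_Icc]
    exact ⟨abs_le.mp (hv.1 _), ⟨v - x, hv.2, rfl⟩⟩
  have hfiber (t : ℤ) : (2 * R + 1 : ℝ) * #{v ∈ T | v (Fin.last m) = t} ≤ B := by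
    rcases ({v ∈ T | v (Fin.last m) = t}).eq_empty_or_nonempty with h | ⟨v₀, hv₀⟩
    · rw [h, card_empty, Nat.cast_zero, mul_zero]
      exact hB
    · obtain ⟨hv₀T, rfl⟩ := mem_filter.mp hv₀
      refine le_trans ?_ (hslice (Fin.init v₀))
      gcongr
      exact card_intBox_fiber_le Γ x v₀ (mem_filter.mp hv₀T).2
  rw [card_eq_sum_card_fiberwise hmaps, Nat.cast_sum, mul_sum]
  simpa using sum_le_sum fun t _ => hfiber t

/-- Multiplying by `2R + 1` instead of using the exponent `m - 1` makes `m = 0` a valid base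
case. -/
theorem card_intBox_filter_sub_mem_le (R : ℕ) {m : ℕ} (Γ : AddSubgroup (Fin m → ℤ))
    (hΓ : Γ.index ≠ 0) (x : Fin m → ℤ) :
    (2 * R + 1 : ℝ) * #{v ∈ intBox m R | v - x ∈ Γ} ≤
      (2 * R + 1) ^ m * (2 * R / Γ.index + 1) := by
  induction m with
  | zero =>
    have hΓ : Γ.index = 1 := AddSubgroup.index_eq_one.mpr (Subsingleton.elim _ _)
    have hcard : (#{v ∈ intBox 0 R | v - x ∈ Γ} : ℝ) ≤ 1 := by
      exact_mod_cast (card_filter_le _ _).trans (by simp [card_intBox])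
    rw [hΓ, pow_zero, one_mul, Nat.cast_one, div_one]
    nlinarith
  | succ m ih =>
    set ℓ := Pi.evalAddMonoidHom (fun _ : Fin (m + 1) => ℤ) (Fin.last m)
    set Γ' := Γ.comap (snocZeroHom m ℤ)
    have hidx : Γ.index = Γ'.index * (Γ.map ℓ).index :=
      AddSubgroup.index_eq_index_comap_mul_index_map_s18
        (fun t => ⟨Pi.single (Fin.last m) t, by simp⟩) (range_snocZeroHom m ℤ) Γ
    rw [hidx] at hΓ ⊢
    have h₁ : (1 : ℝ) ≤ Γ'.index :=
      Nat.one_le_cast.mpr (Nat.pos_of_ne_zero (left_ne_zero_of_mul hΓ))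
    have h₂ : (1 : ℝ) ≤ (Γ.map ℓ).index :=
      Nat.one_le_cast.mpr (Nat.pos_of_ne_zero (right_ne_zero_of_mul hΓ))
    calc (2 * R + 1 : ℝ) * #{v ∈ intBox (m + 1) R | v - x ∈ Γ}
        ≤ #{t ∈ Icc (-(R : ℤ)) R | t - x (Fin.last m) ∈ Γ.map ℓ} *
            ((2 * R + 1) ^ m * (2 * R / Γ'.index + 1)) :=
          card_intBox_filter_sub_mem_le_card_mul Γ x (by positivity)
            fun y₀ => ih Γ' (left_ne_zero_of_mul hΓ) y₀
      _ ≤ (2 * R / (Γ.map ℓ).index + 1) * ((2 * R + 1) ^ m * (2 * R / Γ'.index + 1)) := by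
          gcongr
          exact card_Icc_filter_sub_mem_le R (right_ne_zero_of_mul hΓ) _
      _ = (2 * R + 1) ^ m * ((2 * R / Γ'.index + 1) * (2 * R / (Γ.map ℓ).index + 1)) := by
          ring
      _ ≤ (2 * R + 1) ^ m * ((2 * R + 1) * (2 * R / (Γ'.index * (Γ.map ℓ).index) + 1)) := by
          gcongr ?_ * ?_
          exact div_add_one_mul_div_add_one_le_s18 (by positivity) h₁ h₂
      _ = (2 * R + 1) ^ (m + 1) * (2 * R / ↑(Γ'.index * (Γ.map ℓ).index) + 1) := by
          push_cast
          ring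

theorem Matrix.exists_submatrix_det_ne_zero_of_field {K ι n : Type*} [Field K] [Fintype ι]
    [DecidableEq ι] [Fintype n] {A : Matrix ι n K} (hA : LinearIndependent K A.row) :
    ∃ f : ι → n, (A.submatrix id f).det ≠ 0 := by
  have hspan : Submodule.span K (Set.range (Aᵀ).row) = ⊤ := by
    apply Submodule.eq_top_of_finrank_eq
    rw [← rank_eq_finrank_span_row, rank_transpose, hA.rank_matrix,
      Module.finrank_fintype_fun_eq_card]
  obtain ⟨κ, a, ha, hspan', hli⟩ := exists_linearIndependent' K (Aᵀ).row
  have : Fintype κ := @Fintype.ofFinite κ (Finite.of_injective a ha)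
  have hcard : Fintype.card ι = Fintype.card κ := by
    rw [← Module.finrank_fintype_fun_eq_card (R := K),
      Module.finrank_eq_card_basis (Module.Basis.mk hli (hspan'.trans hspan).ge)]
  let e : ι ≃ κ := Fintype.equivOfCardEq hcard
  refine ⟨a ∘ e, ?_⟩
  rw [← det_transpose, ← isUnit_iff_ne_zero, ← isUnit_iff_isUnit_det,
    ← linearIndependent_rows_iff_isUnit]
  exact hli.comp e e.injective

theorem Matrix.exists_submatrix_det_ne_zero {R ι n : Type*} [CommRing R] [IsDomain R]
    [Fintype ι] [DecidableEq ι] [Fintype n] {A : Matrix ι n R} (hA : LinearIndependent R A.row) :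
    ∃ f : ι → n, (A.submatrix id f).det ≠ 0 := by
  let K := FractionRing R
  have hinj : Function.Injective (LinearMap.compLeft (Algebra.linearMap R K) n) :=
    (IsFractionRing.injective R K).comp_left
  have hAK : LinearIndependent K (A.map (algebraMap R K)).row :=
    (LinearIndependent.iff_fractionRing R K).mp (hA.map' _ (LinearMap.ker_eq_bot.mpr hinj))
  obtain ⟨f, hf⟩ := exists_submatrix_det_ne_zero_of_field hAK
  refine ⟨f, fun h => hf ?_⟩
  rw [submatrix_map]
  exact (RingHom.map_det (algebraMap R K) _).symm.trans (by rw [h, map_zero])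

def minorMatrix {ι n α : Type*} (v : ι → n → α) (f : ι → n) : Matrix ι ι α :=
  of fun i j => v j (f i)

theorem card_intBox_filter_mem_le {m n : ℕ} {Λ : Submodule ℤ (Fin n → ℤ)}
    (b : Module.Basis (Fin m) ℤ Λ) (f : Fin m → Fin n)
    (hf : (minorMatrix (fun j => (b j : Fin n → ℤ)) f).det ≠ 0) (R : ℕ) :
    (2 * R + 1 : ℝ) * #{v ∈ intBox n R | v ∈ Λ} ≤
      (2 * R + 1) ^ m *
        (2 * R / (minorMatrix (fun j => (b j : Fin n → ℤ)) f).det.natAbs + 1) := by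
  set B := minorMatrix (fun j => (b j : Fin n → ℤ)) f
  let φ : Λ →ₗ[ℤ] (Fin m → ℤ) := LinearMap.funLeft ℤ ℤ f ∘ₗ Λ.subtype
  have hφB : LinearMap.toMatrix b (Pi.basisFun ℤ (Fin m)) φ = B := by
    ext i j
    simp [LinearMap.toMatrix_apply, φ, B, minorMatrix, LinearMap.funLeft]
  have hφ : Function.Injective φ := by
    rw [← LinearMap.ker_eq_bot, LinearMap.ker_eq_bot']
    intro x hx
    by_contra hx0
    have hrepr : ⇑(b.repr x) ≠ 0 := by
      rwa [Ne, Finsupp.coe_eq_zero, LinearEquiv.map_eq_zero_iff]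
    refine hf (exists_mulVec_eq_zero_iff.mp ⟨b.repr x, hrepr, ?_⟩)
    rw [← hφB, LinearMap.toMatrix_mulVec_repr, hx, map_zero, Finsupp.coe_zero]
  set Γ := LinearMap.range φ
  have hindex : Γ.toAddSubgroup.index = B.det.natAbs := by
    change Nat.card ((Fin m → ℤ) ⧸ Γ) = _
    rw [← det_transpose, ← Submodule.natAbs_det_basis_change (Pi.basisFun ℤ (Fin m)) Γ
      (b.map (LinearEquiv.ofInjective φ hφ)), Pi.basisFun_det]
    rfl
  have hcount :
      #{v ∈ intBox n R | v ∈ Λ} ≤ #{y ∈ intBox m R | y - 0 ∈ Γ.toAddSubgroup} := by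
    refine card_le_card_of_injOn (fun v => v ∘ f) (fun v hv => ?_) (fun v hv w hw hvw => ?_)
    · simp only [mem_coe, mem_filter, mem_intBox] at hv ⊢
      exact ⟨fun k => hv.1 (f k), by rw [sub_zero]; exact ⟨⟨v, hv.2⟩, rfl⟩⟩
    · simp only [mem_coe, mem_filter] at hv hw
      exact congrArg Subtype.val (hφ (a₁ := ⟨v, hv.2⟩) (a₂ := ⟨w, hw.2⟩) hvw)
  calc (2 * R + 1 : ℝ) * #{v ∈ intBox n R | v ∈ Λ}
      ≤ (2 * R + 1) * #{y ∈ intBox m R | y - 0 ∈ Γ.toAddSubgroup} := by gcongr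
    _ ≤ _ := hindex ▸ card_intBox_filter_sub_mem_le R _ (hindex ▸ Int.natAbs_ne_zero.mpr hf) 0

theorem exists_basis_minorMatrix_det_eq_latticeHeight {N : ℕ}
    (Λ : Submodule ℤ (Fin N → ℤ)) :
    ∃ (b : Module.Basis (Fin (Module.finrank ℤ Λ)) ℤ Λ)
      (f : Fin (Module.finrank ℤ Λ) → Fin N),
      (minorMatrix (fun j => (b j : Fin N → ℤ)) f).det ≠ 0 ∧
      (minorMatrix (fun j => (b j : Fin N → ℤ)) f).det.natAbs = latticeHeight Λ := by
  let b := Module.Free.chooseBasis ℤ Λ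
  let v j := (b j : Fin N → ℤ)
  obtain ⟨f₁, hf₁⟩ := exists_submatrix_det_ne_zero (A := of v)
    (b.linearIndependent.map' Λ.subtype Λ.ker_subtype)
  rw [← det_transpose] at hf₁
  obtain ⟨f₀, -, hH⟩ :=
    exists_mem_eq_sup univ ⟨f₁, mem_univ _⟩ fun f => (minorMatrix v f).det.natAbs
  have hf₀ : (minorMatrix v f₀).det ≠ 0 := by
    have hle : (minorMatrix v f₁).det.natAbs ≤ (minorMatrix v f₀).det.natAbs :=
      hH ▸ le_sup (f := fun f => (minorMatrix v f).det.natAbs) (mem_univ f₁)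
    rw [← Int.natAbs_pos] at hf₁ ⊢
    exact hf₁.trans_le hle
  let σ : Fin (Module.finrank ℤ Λ) ≃ Module.Free.ChooseBasisIndex ℤ Λ :=
    (Fintype.equivFinOfCardEq (Module.finrank_eq_card_chooseBasisIndex ℤ Λ).symm).symm
  have hσ : minorMatrix (fun j => (b.reindex σ.symm j : Fin N → ℤ)) (f₀ ∘ σ) =
      (minorMatrix v f₀).submatrix σ σ := by
    ext i j
    simp [minorMatrix, v]
  refine ⟨b.reindex σ.symm, f₀ ∘ σ, ?_, ?_⟩ <;> rw [hσ, det_submatrix_equiv_self]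
  · exact hf₀
  · exact hH.symm

theorem sub_sqrt_le_of_sq_le {R M S : ℝ} (hS : 0 ≤ S) (hM : 0 ≤ M)
    (h : (2 * R + 1) ^ 2 ≤ 2 * R * S + M) : R - √M ≤ S := by
  rcases le_or_gt R √M with hR | hR
  · linarith
  · have hR0 : 0 < R := (Real.sqrt_nonneg M).trans_lt hR
    have hMR : M < R ^ 2 := by nlinarith [Real.sq_sqrt hM, Real.sqrt_nonneg M]
    have hRS : R ≤ S := by nlinarith
    linarith [Real.sqrt_nonneg M]

theorem stmt_18_general (N M R : ℕ) (hN : 2 ≤ N)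
    (Λ : Fin M → Submodule ℤ (Fin N → ℤ))
    (hrk : ∀ i, Module.finrank ℤ (Λ i) = N - 1)
    (hcover : ∀ x : Fin N → ℤ, (∀ k, |x k| ≤ (R : ℤ)) → ∃ i, x ∈ Λ i) :
    (R : ℝ) - Real.sqrt M ≤ ∑ i, 1 / (latticeHeight (Λ i) : ℝ) := by
  have hcount (i : Fin M) : (2 * R + 1 : ℝ) * #{v ∈ intBox N R | v ∈ Λ i} ≤
      (2 * R + 1) ^ (N - 1) * (2 * R / latticeHeight (Λ i) + 1) := by
    obtain ⟨b, f, hf, hH⟩ := exists_basis_minorMatrix_det_eq_latticeHeight (Λ i)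
    rw [← hrk i, ← hH]
    exact card_intBox_filter_mem_le b f hf R
  have hcard : (2 * R + 1) ^ N ≤ ∑ i, #{v ∈ intBox N R | v ∈ Λ i} := by
    rw [← card_intBox]
    refine (card_le_card fun v hv => ?_).trans card_biUnion_le
    obtain ⟨i, hi⟩ := hcover v (mem_intBox.mp hv)
    exact mem_biUnion.mpr ⟨i, mem_univ i, mem_filter.mpr ⟨hv, hi⟩⟩
  have hsq : (2 * R + 1 : ℝ) ^ (N - 1) * (2 * R + 1) ^ 2 ≤
      (2 * R + 1) ^ (N - 1) * (2 * R * ∑ i, 1 / (latticeHeight (Λ i) : ℝ) + M) := by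
    calc (2 * R + 1 : ℝ) ^ (N - 1) * (2 * R + 1) ^ 2 = (2 * R + 1) * (2 * R + 1) ^ N := by
          rw [← pow_add, ← pow_succ']
          congr 1
          omega
      _ ≤ ∑ i, (2 * R + 1 : ℝ) * #{v ∈ intBox N R | v ∈ Λ i} := by
          rw [← mul_sum]
          gcongr
          exact_mod_cast hcard
      _ ≤ ∑ i, (2 * R + 1 : ℝ) ^ (N - 1) * (2 * R / latticeHeight (Λ i) + 1) :=
          sum_le_sum fun i _ => hcount i
      _ = _ := by
          rw [← mul_sum, sum_add_distrib, mul_sum (a := 2 * (R : ℝ))]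
          simp [div_eq_mul_inv]
  exact sub_sqrt_le_of_sq_le (sum_nonneg fun i _ => by positivity) M.cast_nonneg
    (le_of_mul_le_mul_left hsq (by positivity))

theorem stmt_18 (N M R : ℕ) (hN : 2 ≤ N) (hR : 0 < R)
    (Λ : Fin M → Submodule ℤ (Fin N → ℤ))
    (hrk : ∀ i, Module.finrank ℤ (Λ i) = N - 1)
    (hcover : ∀ x : Fin N → ℤ, (∀ k, |x k| ≤ (R : ℤ)) → ∃ i, x ∈ Λ i) :
    (R : ℝ) - Real.sqrt M ≤ ∑ i, 1 / (latticeHeight (Λ i) : ℝ) :=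
  stmt_18_general N M R hN Λ hrk hcover
end

section
/- Let R be a positive integer and suppose Λ_1,...,Λ_M are sublattices of Z^N of rank N−1 whose union contains all integer points x with max_i |x_i| ≤ R. Then M ≥ 2R − 1. -/
/-!
Over `ℚ`, a sublattice of `ℤ^N` of rank `N - 1` spans a proper subspace, so it lies in the kernel
of a nonzero linear form. If `M` such kernels cover the box `[-R, R]^N`, the product of the `M`
forms is a nonzero polynomial of degree at most `M` vanishing on a grid `S^N` with `#S = 2R + 1`;
by the Combinatorial Nullstellensatz this forces `2R + 1 ≤ M`.
-/

open MvPolynomial Module Finset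

theorem Submodule.exists_dual_ne_zero_forall_intCast_eq_zero {K ι : Type*} [Field K] [Fintype ι]
    (Λ : Submodule ℤ (ι → ℤ)) (hΛ : finrank ℤ Λ < Fintype.card ι) :
    ∃ f : Dual K (ι → K), f ≠ 0 ∧ ∀ x ∈ Λ, f (fun k => (x k : K)) = 0 := by
  let cast : (ι → ℤ) →ₗ[ℤ] ι → K := (Int.castAddHom K).toIntLinearMap.compLeft ι
  let b := Free.chooseBasis ℤ Λ
  let W := Submodule.span K (Set.range (cast ∘ Λ.subtype ∘ b))
  have hΛW : Λ.map cast ≤ W.restrictScalars ℤ := by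
    have hspan : Submodule.span ℤ (Set.range (Λ.subtype ∘ b)) = Λ := by
      rw [Set.range_comp, ← Submodule.map_span, b.span_eq, Submodule.map_top, Submodule.range_subtype]
    rw [← hspan, Submodule.map_span, ← Set.range_comp]
    exact Submodule.span_le_restrictScalars ℤ K _
  have hW : W < ⊤ := by
    apply Submodule.lt_top_of_finrank_lt_finrank
    calc finrank K W ≤ Fintype.card (Free.ChooseBasisIndex ℤ Λ) := finrank_range_le_card _
      _ = finrank ℤ Λ := (finrank_eq_card_chooseBasisIndex ℤ Λ).symm
      _ < finrank K (ι → K) := by rwa [finrank_fintype_fun_eq_card]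
  obtain ⟨f, hf, hfW⟩ := Submodule.exists_dual_map_eq_bot_of_lt_top hW inferInstance
  refine ⟨f, hf, fun x hx => ?_⟩
  have hxW : cast x ∈ W := hΛW (Submodule.mem_map_of_mem hx)
  exact (Submodule.mem_bot K).1 (hfW ▸ Submodule.mem_map_of_mem hxW)

namespace Module.Dual

variable {K ι : Type*} [CommRing K] [Fintype ι]

noncomputable def toMvPolynomial (f : Dual K (ι → K)) : MvPolynomial ι K :=
  ∑ k, C (f (Pi.basisFun K ι k)) * X k

theorem eval_toMvPolynomial (f : Dual K (ι → K)) (x : ι → K) :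
    MvPolynomial.eval x f.toMvPolynomial = f x := by
  conv_rhs => rw [← (Pi.basisFun K ι).sum_repr x]
  simp [toMvPolynomial, mul_comm]

theorem totalDegree_toMvPolynomial_le (f : Dual K (ι → K)) : f.toMvPolynomial.totalDegree ≤ 1 :=
  (totalDegree_finsetSum _ _).trans <| Finset.sup_le fun _ _ => by
    rw [C_mul_X_eq_monomial]
    exact (totalDegree_monomial_le _ _).trans (by simp)

theorem toMvPolynomial_ne_zero {f : Dual K (ι → K)} (hf : f ≠ 0) : f.toMvPolynomial ≠ 0 := by
  contrapose! hf
  ext x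
  simp [← eval_toMvPolynomial, hf]

end Module.Dual

theorem Finset.card_le_of_forall_mem_pi_exists_dual_apply_eq_zero {K ι α : Type*} [CommRing K]
    [IsDomain K] [Fintype ι] [Fintype α] (S : Finset K) (f : α → Dual K (ι → K)) (hf : ∀ i, f i ≠ 0)
    (hcover : ∀ x : ι → K, (∀ k, x k ∈ S) → ∃ i, f i x = 0) : #S ≤ Fintype.card α := by
  set P := ∏ i, (f i).toMvPolynomial
  have hP : P ≠ 0 := prod_ne_zero_iff.2 fun i _ => Dual.toMvPolynomial_ne_zero (hf i)
  by_contra! hlt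
  refine hP (eq_zero_of_eval_zero_at_prod_finset P (fun _ => S) (fun k => ?_) fun x hx => ?_)
  · calc degreeOf k P ≤ P.totalDegree := degreeOf_le_totalDegree P k
      _ ≤ ∑ i, (f i).toMvPolynomial.totalDegree := totalDegree_finsetProd _ _
      _ ≤ ∑ _i : α, 1 := sum_le_sum fun i _ => (f i).totalDegree_toMvPolynomial_le
      _ < #S := by simpa using hlt
  · obtain ⟨i, hi⟩ := hcover x hx
    rw [map_prod]
    exact prod_eq_zero (mem_univ i) (by rwa [Dual.eval_toMvPolynomial])

theorem stmt_19_general (N M R : ℕ) (hN : 2 ≤ N)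
    (Λ : Fin M → Submodule ℤ (Fin N → ℤ))
    (hrk : ∀ i, Module.finrank ℤ (Λ i) = N - 1)
    (hcover : ∀ x : Fin N → ℤ, (∀ k, |x k| ≤ (R : ℤ)) → ∃ i, x ∈ Λ i) :
    2 * (R : ℤ) - 1 ≤ (M : ℤ) := by
  have hrk_lt : ∀ i, finrank ℤ (Λ i) < Fintype.card (Fin N) := by
    simp only [hrk, Fintype.card_fin]
    omega
  choose f hf hfΛ using fun i =>
    (Λ i).exists_dual_ne_zero_forall_intCast_eq_zero (K := ℚ) (hrk_lt i)
  let S : Finset ℚ := (Icc (-(R : ℤ)) R).image (↑)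
  have hS : #S = 2 * R + 1 := by
    rw [card_image_of_injective _ Int.cast_injective, Int.card_Icc]
    omega
  have hcover_S : ∀ x : Fin N → ℚ, (∀ k, x k ∈ S) → ∃ i, f i x = 0 := by
    intro x hx
    choose y hy hyx using fun k => mem_image.1 (hx k)
    obtain ⟨i, hi⟩ := hcover y fun k => abs_le.2 (mem_Icc.1 (hy k))
    exact ⟨i, by simpa [hyx] using hfΛ i y hi⟩
  have hcard := card_le_of_forall_mem_pi_exists_dual_apply_eq_zero S f hf hcover_S
  simp only [hS, Fintype.card_fin] at hcard
  omega

theorem stmt_19 (N M R : ℕ) (hN : 2 ≤ N) (hR : 0 < R)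
    (Λ : Fin M → Submodule ℤ (Fin N → ℤ))
    (hrk : ∀ i, Module.finrank ℤ (Λ i) = N - 1)
    (hcover : ∀ x : Fin N → ℤ, (∀ k, |x k| ≤ (R : ℤ)) → ∃ i, x ∈ Λ i) :
    2 * (R : ℤ) - 1 ≤ (M : ℤ) :=
  stmt_19_general N M R hN Λ hrk hcover
end
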